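/- arXiv:2501.02695 — 5 statements merged into one kernel-verified Lean document; each statement's English description precedes it below -/
import Mathlib

section
/- There exists a constant C > 0 such that for all N ∈ ℕ, f(N) ≥ π(N) + π(N^{1/2}) + (1/3)·π(N^{1/3}) − C. -/
/-- A set of positive integers has *distinct subset products* if any two distinct
finite subsets have distinct products (the empty product is `1`). -/
def DistinctSubsetProds (A : Set ℕ) : Prop :=
  ∀ B C : Finset ℕ, ↑B ⊆ A → ↑C ⊆ A → ∏ b ∈ B, b = ∏ c ∈ C, c → B = C

/-- `primePi x` is the number of primes `p` with `(p : ℝ) ≤ x`. -/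
noncomputable def primePi (x : ℝ) : ℕ := {p : ℕ | p.Prime ∧ (p : ℝ) ≤ x}.ncard

/-- `maxDSP N` is the size of the largest subset of `{1, …, N}` with distinct
subset products. -/
noncomputable def maxDSP (N : ℕ) : ℕ :=
  sSup {k | ∃ A : Finset ℕ, ↑A ⊆ Set.Icc 1 N ∧ DistinctSubsetProds ↑A ∧ A.card = k}

/-!
Every prime `p ≤ N` contributes `p`, and also `p²` when `p ≤ N^{1/2}`: by unique factorization
these `π(N) + π(N^{1/2})` numbers have distinct subset products. Each triple of primes
`a, b, c ≤ N^{1/3}` gains one more element: the seven numbers `c, c², bc², b³, ac², ab, a³`,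
all at most `N`, replace `a, a², b, b², c, c²` and still have distinct subset products, since
their exponent vectors have distinct subset sums. Blocks built on disjoint sets of primes are
coprime to each other, and a union of two coprime sets with distinct subset products again has
this property, because a product over the union splits uniquely into coprime factors.
-/

open Finset Function

theorem Nat.eq_and_eq_of_mul_eq_mul {a b c d : ℕ} (h : a * b = c * d) (had : a.Coprime d)
    (hcb : c.Coprime b) : a = c ∧ b = d :=
  ⟨Nat.dvd_antisymm (had.dvd_of_dvd_mul_right (Dvd.intro b h))
      (hcb.dvd_of_dvd_mul_right (Dvd.intro d h.symm)),
    Nat.dvd_antisymm (hcb.symm.dvd_of_dvd_mul_left (Dvd.intro_left a h))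
      (had.symm.dvd_of_dvd_mul_left (Dvd.intro_left c h.symm))⟩

namespace DistinctSubsetProds

theorem one_notMem {A : Set ℕ} (hA : DistinctSubsetProds A) : 1 ∉ A := fun h1 =>
  singleton_ne_empty 1 (hA {1} ∅ (by simpa) (by simp) (by simp))

theorem union {A B : Set ℕ} (hA : DistinctSubsetProds A) (hB : DistinctSubsetProds B)
    (hAB : ∀ a ∈ A, ∀ b ∈ B, a.Coprime b) : DistinctSubsetProds (A ∪ B) := by
  classical
  intro X Y hX hY hXY
  have split : ∀ Z : Finset ℕ, ↑Z ⊆ A ∪ B →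
      ↑(Z.filter (· ∈ A)) ⊆ A ∧ ↑(Z.filter (· ∉ A)) ⊆ B := fun Z hZ =>
    ⟨fun z hz => (mem_filter.1 hz).2,
      fun z hz => (hZ (mem_filter.1 hz).1).resolve_left (mem_filter.1 hz).2⟩
  obtain ⟨hXA, hXB⟩ := split X hX
  obtain ⟨hYA, hYB⟩ := split Y hY
  have coprime : ∀ S T : Finset ℕ, ↑S ⊆ A → ↑T ⊆ B →
      (∏ s ∈ S, s).Coprime (∏ t ∈ T, t) :=
    fun S T hS hT => Nat.Coprime.prod_left fun s hs => Nat.Coprime.prod_right fun t ht =>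
      hAB s (hS hs) t (hT ht)
  rw [← prod_filter_mul_prod_filter_not X (· ∈ A),
    ← prod_filter_mul_prod_filter_not Y (· ∈ A)] at hXY
  obtain ⟨hprodA, hprodB⟩ := Nat.eq_and_eq_of_mul_eq_mul hXY (coprime _ _ hXA hYB)
    (coprime _ _ hYA hXB)
  rw [← filter_union_filter_not_eq (· ∈ A) X, ← filter_union_filter_not_eq (· ∈ A) Y,
    hA _ _ hXA hYA hprodA, hB _ _ hXB hYB hprodB]

theorem image_of_injective_prod {ι : Type*} [Fintype ι] {F : ι → ℕ}
    (hF : Injective fun s : Finset ι => ∏ i ∈ s, F i) :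
    DistinctSubsetProds ↑(univ.image F) := by
  have hFinj : Injective F := fun i j h =>
    singleton_injective (hF (by simpa using h))
  intro X Y hX hY hXY
  obtain ⟨s, -, rfl⟩ := subset_image_iff.1 (coe_subset.1 hX)
  obtain ⟨t, -, rfl⟩ := subset_image_iff.1 (coe_subset.1 hY)
  rw [prod_image hFinj.injOn, prod_image hFinj.injOn] at hXY
  rw [hF hXY]

end DistinctSubsetProds

structure IsDSPBlock (N : ℕ) (U A : Finset ℕ) : Prop where
  subset_Icc : A ⊆ Icc 1 N
  distinctSubsetProds : DistinctSubsetProds ↑A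
  primeFactors_subset : ∀ a ∈ A, a.primeFactors ⊆ U

namespace IsDSPBlock

variable {N : ℕ} {U W A B : Finset ℕ}

theorem empty (N : ℕ) (U : Finset ℕ) : IsDSPBlock N U ∅ where
  subset_Icc := empty_subset _
  distinctSubsetProds B C hB hC _ := by simp_all
  primeFactors_subset := by simp

theorem ne_zero (hA : IsDSPBlock N U A) {a : ℕ} (ha : a ∈ A) : a ≠ 0 :=
  Nat.one_le_iff_ne_zero.1 (mem_Icc.1 (hA.subset_Icc ha)).1

theorem coprime (hA : IsDSPBlock N U A) (hB : IsDSPBlock N W B) (hUW : Disjoint U W) :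
    ∀ a ∈ A, ∀ b ∈ B, a.Coprime b := fun a ha b hb =>
  (Nat.disjoint_primeFactors (hA.ne_zero ha) (hB.ne_zero hb)).1
    (hUW.mono (hA.primeFactors_subset a ha) (hB.primeFactors_subset b hb))

theorem disjoint (hA : IsDSPBlock N U A) (hB : IsDSPBlock N W B) (hUW : Disjoint U W) :
    Disjoint A B := disjoint_left.2 fun x hxA hxB =>
  hA.distinctSubsetProds.one_notMem <|
    (Nat.coprime_self x).1 (hA.coprime hB hUW x hxA x hxB) ▸ hxA

theorem union (hA : IsDSPBlock N U A) (hB : IsDSPBlock N W B) (hUW : Disjoint U W) :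
    IsDSPBlock N (U ∪ W) (A ∪ B) where
  subset_Icc := union_subset hA.subset_Icc hB.subset_Icc
  distinctSubsetProds := by
    rw [coe_union]
    exact hA.distinctSubsetProds.union hB.distinctSubsetProds (hA.coprime hB hUW)
  primeFactors_subset x hx := (mem_union.1 hx).elim
    (fun h => (hA.primeFactors_subset x h).trans subset_union_left)
    (fun h => (hB.primeFactors_subset x h).trans subset_union_right)

theorem card_le_maxDSP (hA : IsDSPBlock N U A) : #A ≤ maxDSP N := by
  have hbdd : BddAbove {k | ∃ A : Finset ℕ, ↑A ⊆ Set.Icc 1 N ∧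
      DistinctSubsetProds ↑A ∧ A.card = k} := by
    refine ⟨N, ?_⟩
    rintro k ⟨B, hB, -, rfl⟩
    simpa using card_le_card (coe_subset.1 (hB.trans_eq (coe_Icc 1 N).symm))
  exact le_csSup hbdd
    ⟨A, by simpa [← coe_Icc] using hA.subset_Icc, hA.distinctSubsetProds, rfl⟩

end IsDSPBlock

section Monomials

variable {κ ι : Type*} [Fintype κ] [Fintype ι]

def monomials (g : κ → ℕ) (V : ι → κ → ℕ) : Finset ℕ :=
  univ.image fun i => ∏ m, g m ^ V i m

variable {g : κ → ℕ} {V : ι → κ → ℕ}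

theorem factorization_prod_pow_apply (hg : Injective g) (hprime : ∀ m, (g m).Prime)
    (v : κ → ℕ) (m : κ) : (∏ m', g m' ^ v m').factorization (g m) = v m := by
  rw [Nat.factorization_prod fun m' _ => pow_ne_zero _ (hprime m').ne_zero]
  simp only [Finsupp.coe_finsetSum, Finset.sum_apply, (hprime _).factorization_pow,
    Finsupp.single_apply]
  rw [Fintype.sum_eq_single m fun m' hm' => if_neg (hg.ne hm'), if_pos rfl]

theorem injective_prod_pow (hg : Injective g) (hprime : ∀ m, (g m).Prime) :
    Injective fun v : κ → ℕ => ∏ m, g m ^ v m := fun v w h => funext fun m => by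
  simpa [factorization_prod_pow_apply hg hprime] using congrArg (·.factorization (g m)) h

theorem prod_pow_le_of_pow_le {v : κ → ℕ} {N d : ℕ} (hd : d ≠ 0) (hN : 1 ≤ N)
    (hg : ∀ m, g m ^ d ≤ N) (hv : ∑ m, v m ≤ d) : ∏ m, g m ^ v m ≤ N := by
  refine (Nat.pow_le_pow_iff_left hd).1 ?_
  calc (∏ m, g m ^ v m) ^ d = ∏ m, (g m ^ d) ^ v m := by
        rw [← prod_pow]; exact prod_congr rfl fun m _ => pow_right_comm _ _ _
    _ ≤ ∏ m, N ^ v m := prod_le_prod' fun m _ => Nat.pow_le_pow_left (hg m) _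
    _ = N ^ ∑ m, v m := prod_pow_eq_pow_sum _ _ _
    _ ≤ N ^ d := Nat.pow_le_pow_right hN hv

theorem primeFactors_prod_pow_subset (hprime : ∀ m, (g m).Prime) (v : κ → ℕ) :
    (∏ m, g m ^ v m).primeFactors ⊆ univ.image g := by
  intro q hq
  obtain ⟨hq, hdvd, -⟩ := Nat.mem_primeFactors.1 hq
  obtain ⟨m, -, hm⟩ := (Prime.dvd_finsetProd_iff hq.prime _).1 hdvd
  rw [(Nat.prime_dvd_prime_iff_eq hq (hprime m)).1 (hq.dvd_of_dvd_pow hm)]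
  exact mem_image_of_mem g (mem_univ m)


theorem isDSPBlock_monomials {N : ℕ} (hg : Injective g)
    (hprime : ∀ m, (g m).Prime) (hV : Injective fun s : Finset ι => ∑ i ∈ s, V i)
    (hN : ∀ i, ∏ m, g m ^ V i m ≤ N) : IsDSPBlock N (univ.image g) (monomials g V) where
  subset_Icc := by
    intro x hx
    obtain ⟨i, -, rfl⟩ := mem_image.1 hx
    exact mem_Icc.2 ⟨prod_pos fun m _ => pow_pos (hprime m).pos _, hN i⟩
  distinctSubsetProds := by
    refine DistinctSubsetProds.image_of_injective_prod ?_
    have : (fun s : Finset ι => ∏ i ∈ s, ∏ m, g m ^ V i m) =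
        (fun v : κ → ℕ => ∏ m, g m ^ v m) ∘ fun s => ∑ i ∈ s, V i := by
      ext s
      simp [prod_comm (s := s), prod_pow_eq_pow_sum, Finset.sum_apply]
    rw [this]
    exact (injective_prod_pow hg hprime).comp hV
  primeFactors_subset x hx := by
    obtain ⟨i, -, rfl⟩ := mem_image.1 hx
    exact primeFactors_prod_pow_subset hprime (V i)

theorem card_monomials (hg : Injective g) (hprime : ∀ m, (g m).Prime) (hV : Injective V) :
    #(monomials g V) = Fintype.card ι :=
  (card_image_of_injective _ ((injective_prod_pow hg hprime).comp hV)).trans card_univ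

end Monomials

theorem isDSPBlock_singleton {N p : ℕ} (hp : p.Prime) (hpN : p ≤ N) : IsDSPBlock N {p} {p} := by
  have := isDSPBlock_monomials (N := N) (g := ![p]) (V := ![![1]]) (injective_of_subsingleton _)
    (by simpa using hp) (by decide) (by simpa using hpN)
  simpa [monomials] using this

theorem isDSPBlock_pair {N p : ℕ} (hp : p.Prime) (hpN : p ^ 2 ≤ N) :
    IsDSPBlock N {p} {p, p ^ 2} := by
  have := isDSPBlock_monomials (N := N) (g := ![p]) (V := ![![1], ![2]])
    (injective_of_subsingleton _) (by simpa using hp) (by decide)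
    (by simpa [Fin.forall_fin_two] using ⟨(Nat.le_self_pow two_ne_zero p).trans hpN, hpN⟩)
  convert this using 1
  · simp
  · ext x; simp [monomials, Fin.exists_fin_two, eq_comm]

/-- Row `i` holds the exponents of `a, b, c` in the `i`-th of `c, c², bc², b³, ac², ab, a³`. -/
def gadgetExponents : Fin 7 → Fin 3 → ℕ :=
  ![![0, 0, 1], ![0, 0, 2], ![0, 1, 2], ![0, 3, 0], ![1, 0, 2], ![1, 1, 0], ![3, 0, 0]]

set_option maxRecDepth 20000 in
theorem injective_sum_gadgetExponents :
    Injective fun s : Finset (Fin 7) => ∑ i ∈ s, gadgetExponents i := by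
  decide

theorem exists_isDSPBlock_of_card_eq_three {N : ℕ} {T : Finset ℕ} (hT : #T = 3)
    (hTN : ∀ p ∈ T, p.Prime ∧ p ^ 3 ≤ N) : ∃ A, IsDSPBlock N T A ∧ #A = 7 := by
  obtain ⟨a, b, c, hab, hac, hbc, rfl⟩ := card_eq_three.1 hT
  have hg : Injective ![a, b, c] := by
    intro i j
    fin_cases i <;> fin_cases j <;> simp [hab, hac, hbc, hab.symm, hac.symm, hbc.symm]
  have hprime : ∀ m, (![a, b, c] m).Prime := by
    simp [Fin.forall_fin_succ, hTN]
  obtain ⟨ha, haN⟩ := hTN a (mem_insert_self a _)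
  have hN : 1 ≤ N := ha.one_le.trans ((Nat.le_self_pow three_ne_zero a).trans haN)
  refine ⟨monomials ![a, b, c] gadgetExponents, ?_, ?_⟩
  · convert isDSPBlock_monomials hg hprime injective_sum_gadgetExponents fun i =>
      prod_pow_le_of_pow_le three_ne_zero hN (by simp [Fin.forall_fin_succ, hTN]) ?_ using 1
    · ext; simp [Fin.exists_fin_succ, eq_comm]
    · fin_cases i <;> simp [gadgetExponents, Fin.sum_univ_succ]
  · exact card_monomials hg hprime (injective_sum_gadgetExponents.comp singleton_injective)

theorem exists_isDSPBlock_of_cube_le {N : ℕ} (t : ℕ) (U : Finset ℕ)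
    (hU : ∀ p ∈ U, p.Prime ∧ p ^ 3 ≤ N) (hcard : #U = 3 * t) :
    ∃ A, IsDSPBlock N U A ∧ #A = 7 * t := by
  induction t generalizing U with
  | zero => exact ⟨∅, card_eq_zero.1 hcard ▸ IsDSPBlock.empty N ∅, rfl⟩
  | succ t ih =>
    obtain ⟨T, hTU, hT⟩ := exists_subset_card_eq (show 3 ≤ #U by omega)
    obtain ⟨A, hA, hAcard⟩ := exists_isDSPBlock_of_card_eq_three hT fun p hp => hU p (hTU hp)
    obtain ⟨B, hB, hBcard⟩ := ih (U \ T) (fun p hp => hU p (sdiff_subset hp))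
      (by rw [card_sdiff_of_subset hTU]; omega)
    refine ⟨A ∪ B, union_sdiff_of_subset hTU ▸ hA.union hB disjoint_sdiff, ?_⟩
    rw [card_union_of_disjoint (hA.disjoint hB disjoint_sdiff), hAcard, hBcard]
    ring

theorem exists_isDSPBlock_of_le {N : ℕ} (S : Finset ℕ) (hS : ∀ p ∈ S, p.Prime ∧ p ≤ N) :
    ∃ A, IsDSPBlock N S A ∧ #A = #S + #(S.filter (· ^ 2 ≤ N)) := by
  classical
  induction S using Finset.induction_on with
  | empty => exact ⟨∅, IsDSPBlock.empty N ∅, rfl⟩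
  | insert p S hpS ih =>
    obtain ⟨hp, hpN⟩ := hS p (mem_insert_self p S)
    obtain ⟨A, hA, hAcard⟩ := ih fun q hq => hS q (mem_insert_of_mem hq)
    have hdisj : Disjoint {p} S := disjoint_singleton_left.2 hpS
    rw [insert_eq, filter_union, card_union_of_disjoint hdisj,
      card_union_of_disjoint (disjoint_filter_filter hdisj), filter_singleton]
    by_cases hp2 : p ^ 2 ≤ N
    · have hB := isDSPBlock_pair hp hp2
      refine ⟨{p, p ^ 2} ∪ A, hB.union hA hdisj, ?_⟩
      rw [card_union_of_disjoint (hB.disjoint hA hdisj), hAcard, if_pos hp2,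
        card_pair (lt_self_pow₀ hp.one_lt one_lt_two).ne, card_singleton]
      ring
    · have hB := isDSPBlock_singleton hp hpN
      refine ⟨{p} ∪ A, hB.union hA hdisj, ?_⟩
      rw [card_union_of_disjoint (hB.disjoint hA hdisj), hAcard, if_neg hp2, card_empty]
      ring

theorem card_primesLE_add_le_maxDSP (N : ℕ) :
    #(Nat.primesLE N) + #((Nat.primesLE N).filter (· ^ 2 ≤ N)) +
      #((Nat.primesLE N).filter (· ^ 3 ≤ N)) / 3 ≤ maxDSP N := by
  set P := Nat.primesLE N
  obtain ⟨U, hUP₃, hU⟩ := exists_subset_card_eq (Nat.mul_div_le #(P.filter (· ^ 3 ≤ N)) 3)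
  have hUP₂ : U ⊆ P.filter (· ^ 2 ≤ N) := fun p hp => by
    obtain ⟨hpP, hp3⟩ := mem_filter.1 (hUP₃ hp)
    exact mem_filter.2 ⟨hpP, (Nat.pow_le_pow_right (Nat.prime_of_mem_primesLE hpP).pos
      (by norm_num)).trans hp3⟩
  obtain ⟨A, hA, hAcard⟩ := exists_isDSPBlock_of_le (P \ U) fun p hp =>
    ⟨Nat.prime_of_mem_primesLE (sdiff_subset hp), Nat.le_of_mem_primesLE (sdiff_subset hp)⟩
  obtain ⟨B, hB, hBcard⟩ := exists_isDSPBlock_of_cube_le _ U (fun p hp =>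
    ⟨Nat.prime_of_mem_primesLE (mem_filter.1 (hUP₃ hp)).1, (mem_filter.1 (hUP₃ hp)).2⟩) hU
  have hfilter : (P \ U).filter (· ^ 2 ≤ N) = P.filter (· ^ 2 ≤ N) \ U := by
    ext p; simp only [mem_filter, mem_sdiff]; tauto
  have hle := (hA.union hB sdiff_disjoint).card_le_maxDSP
  rw [card_union_of_disjoint (hA.disjoint hB sdiff_disjoint), hAcard, hBcard, hfilter,
    card_sdiff_of_subset (hUP₂.trans (filter_subset _ _)), card_sdiff_of_subset hUP₂] at hle
  have := card_le_card hUP₂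
  omega

theorem le_floor_rpow_one_div_iff {m N k : ℕ} (hk : k ≠ 0) :
    m ≤ ⌊(N : ℝ) ^ ((1 : ℝ) / k)⌋₊ ↔ m ^ k ≤ N := by
  rw [Nat.le_floor_iff (by positivity), one_div,
    Real.le_rpow_inv_iff_of_pos (by positivity) (by positivity) (by positivity),
    Real.rpow_natCast]
  exact_mod_cast Iff.rfl

theorem primePi_eq_card_primesLE (x : ℝ) : primePi x = #(Nat.primesLE ⌊x⌋₊) := by
  rw [primePi, ← Set.ncard_coe_finset]
  congr 1
  ext p
  simp only [mem_coe, Nat.mem_primesLE]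
  exact ⟨fun ⟨hp, hpx⟩ => ⟨(Nat.le_floor_iff' hp.ne_zero).2 hpx, hp⟩,
    fun ⟨hpx, hp⟩ => ⟨hp, (Nat.le_floor_iff' hp.ne_zero).1 hpx⟩⟩

theorem primePi_rpow_one_div (N : ℕ) {k : ℕ} (hk : k ≠ 0) :
    primePi ((N : ℝ) ^ ((1 : ℝ) / k)) = #((Nat.primesLE N).filter (· ^ k ≤ N)) := by
  rw [primePi_eq_card_primesLE]
  congr 1
  ext p
  simp only [Nat.mem_primesLE, mem_filter, le_floor_rpow_one_div_iff hk]
  exact ⟨fun ⟨hpk, hp⟩ => ⟨⟨(Nat.le_self_pow hk p).trans hpk, hp⟩, hpk⟩,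
    fun ⟨⟨_, hp⟩, hpk⟩ => ⟨hpk, hp⟩⟩

/-- `f(N) ≥ π(N) + π(N^{1/2}) + (1/3)·π(N^{1/3}) − C` for an absolute constant `C`. -/
theorem stmt2 : ∃ C : ℝ, 0 < C ∧ ∀ N : ℕ,
    (maxDSP N : ℝ) ≥ primePi N + primePi ((N : ℝ) ^ ((1 : ℝ) / 2)) +
      (1 / 3) * primePi ((N : ℝ) ^ ((1 : ℝ) / 3)) - C := by
  refine ⟨1, one_pos, fun N => ?_⟩
  have h₂ := primePi_rpow_one_div N two_ne_zero
  have h₃ := primePi_rpow_one_div N three_ne_zero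
  simp only [Nat.cast_ofNat] at h₂ h₃
  rw [primePi_eq_card_primesLE, Nat.floor_natCast, h₂, h₃]
  have hmain := card_primesLE_add_le_maxDSP N
  generalize #((Nat.primesLE N).filter (· ^ 3 ≤ N)) = c at hmain ⊢
  have hc : (c : ℝ) ≤ 3 * (c / 3 : ℕ) + 2 := by
    exact_mod_cast (by omega : c ≤ 3 * (c / 3) + 2)
  have hmain' := (Nat.cast_le (α := ℝ)).2 hmain
  push_cast at hmain'
  linarith
end

section
/- For every ε > 0 there exists a constant C > 0 such that for all N ∈ ℕ, the number of distinct tuples (v_p(n))_{p prime, p ≤ N^{1/3}} arising from elements n of the subset product set Π([N]) = {∏_{t∈T} t : T ⊆ [N]} is at most exp(C·N^{1/3+ε}). Here v_p(n) denotes the p-adic valuation of n. -/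
/-!
Every `n ∈ Π([N])` is a nonzero product of at most `N` factors `≤ N`, so `n ≤ 2 ^ N²` and hence
`v_p(n) ≤ N²` for every prime `p`. The valuation tuples therefore lie in `{0, …, N²} ^ π(N^{1/3})`,
giving at most `(N² + 1) ^ N^{1/3} = exp(N^{1/3} log (N² + 1))` of them, and
`log (N² + 1) ≤ 2 log (2N) = O_ε(N^ε)`.
-/

open Real

lemma padicValNat_le_of_le_two_pow {p m k : ℕ} (hp : 1 < p) (hm : m ≠ 0) (hmk : m ≤ 2 ^ k) :
    padicValNat p m ≤ k :=
  (Nat.pow_le_pow_iff_right one_lt_two).mp <|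
    calc 2 ^ padicValNat p m ≤ p ^ padicValNat p m := Nat.pow_le_pow_left hp _
      _ ≤ m := Nat.le_of_dvd (Nat.pos_of_ne_zero hm) pow_padicValNat_dvd
      _ ≤ 2 ^ k := hmk

section SubsetProduct

variable {N : ℕ} {T : Finset ℕ}

lemma prod_ne_zero_of_subset_Icc (hT : ↑T ⊆ Set.Icc 1 N) : ∏ t ∈ T, t ≠ 0 :=
  Finset.prod_ne_zero_iff.mpr fun _ ht => Nat.one_le_iff_ne_zero.mp (hT ht).1

lemma prod_le_two_pow_sq_of_subset_Icc (hT : ↑T ⊆ Set.Icc 1 N) : ∏ t ∈ T, t ≤ 2 ^ N ^ 2 := by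
  have hTIcc : T ⊆ Finset.Icc 1 N := Finset.coe_subset.mp (by rwa [Finset.coe_Icc])
  have hcard : T.card ≤ N := by simpa using Finset.card_le_card hTIcc
  calc ∏ t ∈ T, t ≤ (2 ^ N) ^ T.card :=
        Finset.prod_le_pow_card _ _ _ fun t ht => (hT ht).2.trans Nat.lt_two_pow_self.le
    _ ≤ (2 ^ N) ^ N := Nat.pow_le_pow_right (by positivity) hcard
    _ = 2 ^ N ^ 2 := by rw [← pow_mul, sq]

lemma padicValNat_prod_le_sq_of_subset_Icc {p : ℕ} (hp : p.Prime) (hT : ↑T ⊆ Set.Icc 1 N) :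
    padicValNat p (∏ t ∈ T, t) ≤ N ^ 2 :=
  padicValNat_le_of_le_two_pow hp.one_lt (prod_ne_zero_of_subset_Icc hT)
    (prod_le_two_pow_sq_of_subset_Icc hT)

end SubsetProduct

lemma Set.ncard_le_pow_of_forall_le {ι : Type*} [Finite ι] {A : Set (ι → ℕ)} {B : ℕ}
    (hA : ∀ f ∈ A, ∀ i, f i ≤ B) : A.ncard ≤ (B + 1) ^ Nat.card ι := by
  rw [← Nat.card_coe_set_eq]
  calc Nat.card A ≤ Nat.card (ι → Fin (B + 1)) := by
        refine Nat.card_le_card_of_injective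
          (fun f i => ⟨f.1 i, Nat.lt_succ_of_le (hA f f.2 i)⟩) fun f g hfg => ?_
        exact Subtype.ext <| funext fun i => congrArg Fin.val (congrFun hfg i)
    _ = (B + 1) ^ Nat.card ι := by simp [Nat.card_fun]

section PrimesLe

variable (x : ℝ)

lemma setOf_prime_le_subset_Icc : {p : ℕ | p.Prime ∧ (p : ℝ) ≤ x} ⊆ Set.Icc 1 ⌊x⌋₊ :=
  fun _ hp => ⟨hp.1.one_le, Nat.le_floor hp.2⟩

instance finite_primes_le : Finite {p : ℕ // p.Prime ∧ (p : ℝ) ≤ x} :=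
  ((Set.finite_Icc 1 ⌊x⌋₊).subset (setOf_prime_le_subset_Icc x)).to_subtype

lemma card_primes_le_le_floor : Nat.card {p : ℕ // p.Prime ∧ (p : ℝ) ≤ x} ≤ ⌊x⌋₊ :=
  calc Nat.card {p : ℕ // p.Prime ∧ (p : ℝ) ≤ x}
      = {p : ℕ | p.Prime ∧ (p : ℝ) ≤ x}.ncard := Nat.card_coe_set_eq _
    _ ≤ (Set.Icc 1 ⌊x⌋₊).ncard := Set.ncard_le_ncard (setOf_prime_le_subset_Icc x)
    _ = ⌊x⌋₊ := by simp [Set.ncard_eq_toFinset_card']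

end PrimesLe

lemma log_sq_add_one_le_rpow {ε : ℝ} (hε : 0 < ε) (N : ℕ) :
    log ((N : ℝ) ^ 2 + 1) ≤ 2 * 2 ^ ε / ε * (N : ℝ) ^ ε := by
  rcases N.eq_zero_or_pos with rfl | hN
  · simp [zero_rpow hε.ne']
  have hN : (1 : ℝ) ≤ N := by exact_mod_cast hN
  calc log ((N : ℝ) ^ 2 + 1) ≤ log ((2 * N) ^ 2) := log_le_log (by positivity) (by nlinarith)
    _ = 2 * log (2 * N) := by rw [log_pow]; push_cast; ring
    _ ≤ 2 * ((2 * N) ^ ε / ε) := by gcongr; exact log_le_rpow_div (by positivity) hε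
    _ = 2 * 2 ^ ε / ε * (N : ℝ) ^ ε := by rw [mul_rpow zero_le_two (Nat.cast_nonneg N)]; ring

/-- The number of distinct tuples of `p`-adic valuations at primes `p ≤ N^{1/3}` arising
from elements of the subset product set `Π([N]) = {∏_{t ∈ T} t : T ⊆ [N]}` is at most
`exp(C·N^{1/3+ε})`. -/
theorem stmt6 : ∀ ε : ℝ, 0 < ε → ∃ C : ℝ, 0 < C ∧ ∀ N : ℕ,
    (Set.ncard
      ((fun n : ℕ => fun p : {p : ℕ // p.Prime ∧ (p : ℝ) ≤ (N : ℝ) ^ ((1 : ℝ) / 3)} =>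
          padicValNat p n) ''
        {m : ℕ | ∃ T : Finset ℕ, ↑T ⊆ Set.Icc 1 N ∧ ∏ t ∈ T, t = m}) : ℝ) ≤
      Real.exp (C * (N : ℝ) ^ ((1 : ℝ) / 3 + ε)) := by
  intro ε hε
  refine ⟨2 * 2 ^ ε / ε, by positivity, fun N => ?_⟩
  set x := (N : ℝ) ^ ((1 : ℝ) / 3) with hx
  set k := Nat.card {p : ℕ // p.Prime ∧ (p : ℝ) ≤ x}
  have hk : (k : ℝ) ≤ x :=
    (Nat.cast_le.mpr (card_primes_le_le_floor x)).trans (Nat.floor_le (by positivity))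
  calc _ ≤ ((N : ℝ) ^ 2 + 1) ^ k := by
        refine mod_cast Set.ncard_le_pow_of_forall_le (B := N ^ 2) ?_
        rintro _ ⟨_, ⟨T, hT, rfl⟩, rfl⟩ p
        exact padicValNat_prod_le_sq_of_subset_Icc p.2.1 hT
    _ = exp (k * log ((N : ℝ) ^ 2 + 1)) := by rw [← log_pow, exp_log (by positivity)]
    _ ≤ exp (x * (2 * 2 ^ ε / ε * (N : ℝ) ^ ε)) := by
        gcongr
        · exact log_nonneg (by nlinarith)
        · exact log_sq_add_one_le_rpow hε N
    _ = exp (2 * 2 ^ ε / ε * (N : ℝ) ^ ((1 : ℝ) / 3 + ε)) := by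
        rw [rpow_add' (Nat.cast_nonneg N) (by positivity), ← hx, mul_left_comm]
end

section
/- For every ε > 0 there exists a constant C > 0 such that for all N ∈ ℕ and all A ⊆ [N] with distinct subset products, the number of elements a ∈ A for which there exists a' ∈ A with a' ≠ a and v_p(a') = v_p(a) for every prime p with N^{1/3} < p ≤ N, is at most C·N^{1/3+ε}. -/
/-! Put `y = ⌊N^{1/3}⌋` and let `T ⊆ A` be the set being counted. Grouping the elements of `T`
by their exponents at the primes `> y` gives classes of size at least `2`. The product of a
subset `B ⊆ T` is determined by how many elements `B` takes from each class together with the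
exponents of `∏ B` at the `y + 1` numbers `≤ y`, each at most `N²`. Distinct subset products
therefore give `2^|T| ≤ ∏ (c + 1) · (N² + 1)^(y + 1)` over the class sizes `c ≥ 2`, and
`(c + 1)^5 ≤ 2^(4c)` turns this into `2^(|T|/5) ≤ (N² + 1)^(y + 1)`,
so `|T| = O(N^{1/3} log N)`. -/

open Finset

noncomputable def factorizationAbove (y a : ℕ) : ℕ →₀ ℕ :=
  a.factorization.filter (y < ·)

lemma factorizationAbove_eq_iff {y a b : ℕ} :
    factorizationAbove y a = factorizationAbove y b ↔
      ∀ p, y < p → a.factorization p = b.factorization p := by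
  simp only [factorizationAbove, Finsupp.ext_iff, Finsupp.filter_apply]
  refine forall_congr' fun p => ?_
  by_cases hp : y < p <;> simp [hp]

lemma factorizationAbove_prod {y : ℕ} {B : Finset ℕ} (hB : 0 ∉ B) :
    factorizationAbove y (∏ b ∈ B, b) = ∑ b ∈ B, factorizationAbove y b := by
  rw [factorizationAbove, Nat.factorization_prod fun b hb h => hB (h ▸ hb), Finsupp.filter_sum]
  rfl

lemma sum_factorizationAbove_eq_sum_card_smul {y : ℕ} {B T : Finset ℕ} (hBT : B ⊆ T) :
    ∑ b ∈ B, factorizationAbove y b =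
      ∑ ℓ ∈ T.image (factorizationAbove y), #{b ∈ B | factorizationAbove y b = ℓ} • ℓ := by
  refine (sum_fiberwise_of_maps_to' (g := factorizationAbove y) (f := id)
    fun b hb => mem_image_of_mem _ (hBT hb)).symm.trans ?_
  simp only [id, sum_const]

lemma pow_five_le_two_pow {n : ℕ} (hn : 2 ≤ n) : (n + 1) ^ 5 ≤ 2 ^ (4 * n) := by
  induction n, hn using Nat.le_induction with
  | base => norm_num
  | succ n hn ih =>
    calc (n + 1 + 1) ^ 5 ≤ 16 * (n + 1) ^ 5 := by ring_nf; nlinarith [pow_pos (by omega : 0 < n) 4]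
      _ ≤ 2 ^ (4 * (n + 1)) := by rw [mul_add, pow_add]; omega

lemma prod_add_one_pow_five_le {ι : Type*} {s : Finset ι} {f : ι → ℕ} (hf : ∀ i ∈ s, 2 ≤ f i) :
    (∏ i ∈ s, (f i + 1)) ^ 5 ≤ 2 ^ (4 * ∑ i ∈ s, f i) := by
  rw [← prod_pow, mul_sum, ← prod_pow_eq_pow_sum]
  exact prod_le_prod' fun i hi => pow_five_le_two_pow (hf i hi)

lemma factorizationAbove_floor_eq_iff {x : ℝ} (hx : 0 ≤ x) {N a a' : ℕ} (ha : a ≤ N)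
    (ha' : a' ≤ N) : factorizationAbove ⌊x⌋₊ a' = factorizationAbove ⌊x⌋₊ a ↔
      ∀ p : ℕ, p.Prime → x < p → p ≤ N → padicValNat p a' = padicValNat p a := by
  rw [factorizationAbove_eq_iff]
  constructor
  · intro h p hp hxp _
    rw [← Nat.factorization_def _ hp, ← Nat.factorization_def _ hp]
    exact h p ((Nat.floor_lt hx).2 hxp)
  · intro h p hyp
    by_cases hp : p.Prime
    · rcases le_or_gt p N with hpN | hNp
      · rw [Nat.factorization_def _ hp, Nat.factorization_def _ hp]
        exact h p hp ((Nat.floor_lt hx).1 hyp) hpN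
      · rw [Nat.factorization_eq_zero_of_lt (by omega), Nat.factorization_eq_zero_of_lt (by omega)]
    · simp only [Nat.factorization_eq_zero_of_not_prime _ hp]

lemma prod_eq_prod_of_card_fiber_eq {y : ℕ} {T B B' : Finset ℕ} (hT : 0 ∉ T) (hB : B ⊆ T)
    (hB' : B' ⊆ T)
    (hfiber : ∀ ℓ ∈ T.image (factorizationAbove y),
      #{b ∈ B | factorizationAbove y b = ℓ} = #{b ∈ B' | factorizationAbove y b = ℓ})
    (hlow : ∀ q ≤ y, (∏ b ∈ B, b).factorization q = (∏ b ∈ B', b).factorization q) :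
    ∏ b ∈ B, b = ∏ b ∈ B', b := by
  have hB0 : 0 ∉ B := fun h => hT (hB h)
  have hB'0 : 0 ∉ B' := fun h => hT (hB' h)
  have hhigh : factorizationAbove y (∏ b ∈ B, b) = factorizationAbove y (∏ b ∈ B', b) := by
    rw [factorizationAbove_prod hB0, factorizationAbove_prod hB'0,
      sum_factorizationAbove_eq_sum_card_smul hB, sum_factorizationAbove_eq_sum_card_smul hB']
    exact sum_congr rfl fun ℓ hℓ => by rw [hfiber ℓ hℓ]
  refine Nat.eq_of_factorization_eq (prod_ne_zero_iff.2 fun b hb h => hB0 (h ▸ hb))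
    (prod_ne_zero_iff.2 fun b hb h => hB'0 (h ▸ hb)) fun q => ?_
  rcases le_or_gt q y with hqy | hyq
  · exact hlow q hqy
  · exact factorizationAbove_eq_iff.1 hhigh q hyq

lemma factorization_prod_le {N : ℕ} {B : Finset ℕ} (hB : B ⊆ Icc 1 N) (q : ℕ) :
    (∏ b ∈ B, b).factorization q ≤ N * N := by
  have hB0 : ∀ b ∈ B, b ≠ 0 := fun b hb => by have := mem_Icc.1 (hB hb); omega
  rw [Nat.factorization_prod hB0, Finsupp.finsetSum_apply]
  calc ∑ b ∈ B, b.factorization q ≤ ∑ _b ∈ B, N :=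
        sum_le_sum fun b hb => (Nat.factorization_lt q (hB0 b hb)).le.trans (mem_Icc.1 (hB hb)).2
    _ = #B * N := by rw [sum_const, smul_eq_mul]
    _ ≤ N * N := by
      gcongr
      simpa using card_le_card hB

lemma two_pow_card_le {y N : ℕ} {T : Finset ℕ} (hTN : T ⊆ Icc 1 N)
    (hD : DistinctSubsetProds ↑T) :
    2 ^ #T ≤ (∏ ℓ ∈ T.image (factorizationAbove y),
      (#{b ∈ T | factorizationAbove y b = ℓ} + 1)) * (N * N + 1) ^ (y + 1) := by
  have hinj := card_le_card_of_injOn (s := T.powerset)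
    (t := ((T.image (factorizationAbove y)).pi fun ℓ =>
      range (#{b ∈ T | factorizationAbove y b = ℓ} + 1)) ×ˢ
      (range (y + 1)).pi fun _ => range (N * N + 1))
    (fun B => (fun ℓ _ => #{b ∈ B | factorizationAbove y b = ℓ},
      fun q _ => (∏ b ∈ B, b).factorization q)) ?maps ?inj
  · simpa only [card_powerset, card_product, card_pi, card_range, prod_const] using hinj
  case maps =>
    intro B hB
    rw [coe_powerset, Set.mem_preimage, Set.mem_powerset_iff, coe_subset] at hB
    simp only [coe_product, Set.mem_prod, mem_coe, mem_pi, mem_range, Nat.lt_succ_iff]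
    exact ⟨fun ℓ _ => card_le_card (filter_subset_filter _ hB),
      fun q _ => factorization_prod_le (hB.trans hTN) q⟩
  case inj =>
    intro B hB B' hB' heq
    simp only [coe_powerset, Set.mem_preimage, Set.mem_powerset_iff, coe_subset] at hB hB'
    simp only [Prod.mk.injEq, funext_iff] at heq
    have hT0 : 0 ∉ T := fun h => by simpa using hTN h
    refine hD B B' (coe_subset.2 hB) (coe_subset.2 hB') (prod_eq_prod_of_card_fiber_eq hT0 hB hB'
      (fun ℓ hℓ => heq.1 ℓ hℓ) fun q hq => heq.2 q (mem_range.2 (Nat.lt_succ_of_le hq)))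

lemma card_le_of_forall_exists_factorizationAbove_eq {y N : ℕ} {T : Finset ℕ}
    (hTN : T ⊆ Icc 1 N) (hD : DistinctSubsetProds ↑T)
    (hpartner : ∀ a ∈ T, ∃ a' ∈ T, a' ≠ a ∧ factorizationAbove y a' = factorizationAbove y a) :
    #T ≤ 10 * (y + 1) * (Nat.log 2 N + 1) := by
  set classes := T.image (factorizationAbove y)
  set P := ∏ ℓ ∈ classes, (#{b ∈ T | factorizationAbove y b = ℓ} + 1)
  have hfiber : ∀ ℓ ∈ classes, 2 ≤ #{b ∈ T | factorizationAbove y b = ℓ} := by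
    intro ℓ hℓ
    obtain ⟨a, haT, rfl⟩ := mem_image.1 hℓ
    obtain ⟨a', ha'T, hne, heq⟩ := hpartner a haT
    exact one_lt_card.2 ⟨a', mem_filter.2 ⟨ha'T, heq⟩, a, mem_filter.2 ⟨haT, rfl⟩, hne⟩
  have hP : P ^ 5 ≤ 2 ^ (4 * #T) := by
    rw [card_eq_sum_card_fiberwise fun b hb => mem_image_of_mem (factorizationAbove y) hb]
    exact prod_add_one_pow_five_le hfiber
  have hN : N * N + 1 ≤ 2 ^ (2 * (Nat.log 2 N + 1)) := by
    have := Nat.lt_pow_succ_log_self one_lt_two N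
    calc N * N + 1 ≤ 2 ^ (Nat.log 2 N + 1) * 2 ^ (Nat.log 2 N + 1) := Nat.mul_self_lt_mul_self this
      _ = 2 ^ (2 * (Nat.log 2 N + 1)) := by ring
  have key : 2 ^ (4 * #T) * 2 ^ #T ≤ 2 ^ (4 * #T) * 2 ^ (10 * (y + 1) * (Nat.log 2 N + 1)) :=
    calc 2 ^ (4 * #T) * 2 ^ #T = (2 ^ #T) ^ 5 := by ring
      _ ≤ (P * (N * N + 1) ^ (y + 1)) ^ 5 := Nat.pow_le_pow_left (two_pow_card_le hTN hD) 5
      _ = P ^ 5 * (N * N + 1) ^ (5 * (y + 1)) := by ring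
      _ ≤ 2 ^ (4 * #T) * (2 ^ (2 * (Nat.log 2 N + 1))) ^ (5 * (y + 1)) := by gcongr
      _ = 2 ^ (4 * #T) * 2 ^ (10 * (y + 1) * (Nat.log 2 N + 1)) := by
        rw [← pow_mul]; congr 2; ring
  exact (Nat.pow_le_pow_iff_right one_lt_two).1 (Nat.le_of_mul_le_mul_left key (by positivity))

lemma DistinctSubsetProds.mono {A B : Set ℕ} (hA : DistinctSubsetProds A) (hBA : B ⊆ A) :
    DistinctSubsetProds B :=
  fun C D hC hD => hA C D (hC.trans hBA) (hD.trans hBA)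

lemma ncard_le_of_padicValNat_eq_above {x : ℝ} (hx : 0 ≤ x) {N : ℕ} {A : Finset ℕ}
    (hA : A ⊆ Icc 1 N) (hD : DistinctSubsetProds ↑A) :
    {a : ℕ | a ∈ A ∧ ∃ a' ∈ A, a' ≠ a ∧ ∀ p : ℕ, p.Prime → x < p → p ≤ N →
      padicValNat p a' = padicValNat p a}.ncard ≤ 10 * (⌊x⌋₊ + 1) * (Nat.log 2 N + 1) := by
  set T := {a ∈ A | ∃ a' ∈ A, a' ≠ a ∧ factorizationAbove ⌊x⌋₊ a' = factorizationAbove ⌊x⌋₊ a}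
  have hT : {a : ℕ | a ∈ A ∧ ∃ a' ∈ A, a' ≠ a ∧ ∀ p : ℕ, p.Prime → x < p → p ≤ N →
      padicValNat p a' = padicValNat p a} = ↑T := by
    ext a
    simp only [T, coe_filter]
    refine and_congr_right fun ha => exists_congr fun a' =>
      and_congr_right fun ha' => and_congr_right fun _ => ?_
    exact (factorizationAbove_floor_eq_iff hx (mem_Icc.1 (hA ha)).2 (mem_Icc.1 (hA ha')).2).symm
  have hpartner : ∀ a ∈ T, ∃ a' ∈ T, a' ≠ a ∧
      factorizationAbove ⌊x⌋₊ a' = factorizationAbove ⌊x⌋₊ a := by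
    intro a ha
    obtain ⟨haA, a', ha', hne, heq⟩ := mem_filter.1 ha
    exact ⟨a', mem_filter.2 ⟨ha', a, haA, hne.symm, heq.symm⟩, hne, heq⟩
  have hTA : T ⊆ A := filter_subset _ _
  rw [hT, Set.ncard_coe_finset]
  exact card_le_of_forall_exists_factorizationAbove_eq (hTA.trans hA)
    (hD.mono (coe_subset.2 hTA)) hpartner

lemma natLog_two_add_one_le {ε : ℝ} (hε : 0 < ε) {N : ℕ} (hN : 1 ≤ N) :
    (Nat.log 2 N + 1 : ℝ) ≤ (2 / ε + 1) * (N : ℝ) ^ ε := by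
  have hN' : (1 : ℝ) ≤ N := by exact_mod_cast hN
  have hlog : (Nat.log 2 N : ℝ) ≤ 2 * Real.log N := by
    calc (Nat.log 2 N : ℝ) ≤ Real.logb 2 N := Real.natLog_le_logb N 2
      _ = Real.log N / Real.log 2 := rfl
      _ ≤ 2 * Real.log N := by
        rw [div_le_iff₀ (Real.log_pos one_lt_two)]
        nlinarith [Real.log_two_gt_d9, Real.log_nonneg hN']
  have := Real.log_natCast_le_rpow_div N hε
  have := Real.one_le_rpow hN' hε.le
  calc (Nat.log 2 N + 1 : ℝ) ≤ 2 * ((N : ℝ) ^ ε / ε) + (N : ℝ) ^ ε := by linarith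
    _ = (2 / ε + 1) * (N : ℝ) ^ ε := by ring

/-- For `A ⊆ [N]` with distinct subset products, the number of `a ∈ A` agreeing with some
other `a' ∈ A` in all valuations at primes in `(N^{1/3}, N]` is at most `C·N^{1/3+ε}`. -/
theorem stmt7 : ∀ ε : ℝ, 0 < ε → ∃ C : ℝ, 0 < C ∧ ∀ N : ℕ, ∀ A : Finset ℕ,
    ↑A ⊆ Set.Icc 1 N → DistinctSubsetProds ↑A →
    ({a : ℕ | a ∈ A ∧ ∃ a' ∈ A, a' ≠ a ∧ ∀ p : ℕ, p.Prime →
        (N : ℝ) ^ ((1 : ℝ) / 3) < (p : ℝ) → p ≤ N →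
        padicValNat p a' = padicValNat p a}.ncard : ℝ) ≤
      C * (N : ℝ) ^ ((1 : ℝ) / 3 + ε) := by
  intro ε hε
  refine ⟨20 * (2 / ε + 1), by positivity, fun N A hA hD => ?_⟩
  rw [← coe_Icc, coe_subset] at hA
  rcases Nat.eq_zero_or_pos N with rfl | hN
  · obtain rfl : A = ∅ := by simpa using hA
    simp only [notMem_empty, false_and, Set.ofPred_false, Set.ncard_empty, Nat.cast_zero]
    positivity
  set x := (N : ℝ) ^ ((1 : ℝ) / 3)
  have hx : 0 ≤ x := by positivity
  have hfloor : (⌊x⌋₊ + 1 : ℝ) ≤ 2 * x := by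
    have := Real.one_le_rpow (Nat.one_le_cast.2 hN) (by norm_num : (0 : ℝ) ≤ 1 / 3)
    linarith [Nat.floor_le hx]
  calc _ ≤ (10 * (⌊x⌋₊ + 1) * (Nat.log 2 N + 1) : ℝ) := by
        exact_mod_cast ncard_le_of_padicValNat_eq_above hx hA hD
    _ ≤ 10 * (2 * x) * ((2 / ε + 1) * (N : ℝ) ^ ε) := by
        gcongr
        exact natLog_two_add_one_le hε hN
    _ = 20 * (2 / ε + 1) * (N : ℝ) ^ ((1 : ℝ) / 3 + ε) := by
        rw [Real.rpow_add (by exact_mod_cast hN)]; ring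
end

section
/- For every ε > 0 there exists a constant C > 0 with the following property. Let N ∈ ℕ and let A ⊆ [N] have distinct subset products, such that the map a ↦ (v_p(a))_{p prime, N^{1/3} < p ≤ N} is injective on A and every a ∈ A is divisible by some prime in (N^{1/3}, N]. Then one can remove a set E' of at most C·N^{5/12+ε} edges from the prime factorization graph G(A) so that the remaining graph contains no circuit of even length at most 2·N^{1/12}. -/
/-- `PLM N p` : `p` is a prime in `(N^{1/3}, N]` (a "large or medium" prime). -/
def PLM (N : ℕ) (p : ℕ) : Prop :=
  p.Prime ∧ (N : ℝ) ^ ((1 : ℝ) / 3) < (p : ℝ) ∧ p ≤ N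

/-- The *prime factorization graph* of `A ⊆ [N]`: the vertices are the natural numbers
(only `1` and the primes in `(N^{1/3}, N]` can fail to be isolated); `1` is joined to a
prime `p ∈ (N^{1/3}, N]` if some `a ∈ A` has `v_p(a) = 1` and `v_q(a) = 0` for every
other prime `q ∈ (N^{1/3}, N]`; two distinct primes `p, q ∈ (N^{1/3}, N]` are joined if
some `a ∈ A` is divisible by both. -/
def pfGraph (N : ℕ) (A : Finset ℕ) : SimpleGraph ℕ where
  Adj x y := x ≠ y ∧
    ((x = 1 ∧ PLM N y ∧ ∃ a ∈ A, padicValNat y a = 1 ∧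
        ∀ q, PLM N q → q ≠ y → padicValNat q a = 0) ∨
     (y = 1 ∧ PLM N x ∧ ∃ a ∈ A, padicValNat x a = 1 ∧
        ∀ q, PLM N q → q ≠ x → padicValNat q a = 0) ∨
     (PLM N x ∧ PLM N y ∧ ∃ a ∈ A, x ∣ a ∧ y ∣ a))
  symm := by
    constructor
    intro x y ⟨hne, h⟩
    refine ⟨hne.symm, ?_⟩
    rcases h with h | h | ⟨hx, hy, a, ha, hxa, hya⟩
    · exact Or.inr (Or.inl h)
    · exact Or.inl h
    · exact Or.inr (Or.inr ⟨hy, hx, a, ha, hya, hxa⟩)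
  loopless := ⟨fun x h => h.1 rfl⟩

/-- The list of edges of the closed walk determined by the vertex list `l`. -/
def circuitEdgeList {V : Type*} (l : List V) : List (Sym2 V) :=
  (l.zip (l.rotate 1)).map fun p => s(p.1, p.2)

/-- `E` is the edge set of a circuit of length `k` in `G` : there are (not necessarily
distinct) vertices `v_1, …, v_k` such that the `k` edges
`{v_1,v_2}, {v_2,v_3}, …, {v_k,v_1}` all lie in `G`, are pairwise distinct, and make up
`E`. -/
def IsCircuit {V : Type*} (G : SimpleGraph V) (k : ℕ) (E : Set (Sym2 V)) : Prop :=
  ∃ l : List V, l.length = k ∧ l ≠ [] ∧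
    (∀ p ∈ l.zip (l.rotate 1), G.Adj p.1 p.2) ∧
    (circuitEdgeList l).Nodup ∧
    E = {e | e ∈ circuitEdgeList l}

/-- `E` is the edge set of a cycle of length `k` in `G` : as for a circuit, but the
vertices `v_1, …, v_k` are pairwise distinct. -/
def IsCycle {V : Type*} (G : SimpleGraph V) (k : ℕ) (E : Set (Sym2 V)) : Prop :=
  ∃ l : List V, l.length = k ∧ l ≠ [] ∧ l.Nodup ∧
    (∀ p ∈ l.zip (l.rotate 1), G.Adj p.1 p.2) ∧
    (circuitEdgeList l).Nodup ∧
    E = {e | e ∈ circuitEdgeList l}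

/-!
Every edge `e` of `G(A)` is witnessed by some `a ∈ A` whose exponents at the primes of
`(N^{1/3}, N]` are exactly those of the vertices of `e` (a number `≤ N` has at most two such prime
factors with multiplicity), and distinct edges have distinct witnesses. In an even circuit the edges
in odd and in even position meet every vertex equally often, so the two halves give disjoint
`B, C ⊆ A` whose products agree at all primes above `N^{1/3}`.

Delete all edges of a maximal family `M` of edge-disjoint short even circuits: at most
`|M| · 2N^{1/12}` edges, and every short even circuit meets one of them. Choosing `B` or `C` in
each circuit of `M` gives `2^{|M|}` subsets of `A`, with distinct products by the distinct subset
products property, all agreeing above `N^{1/3}`. They are separated by their exponents at the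
`≤ N^{1/3} + 1` small primes, each at most `N²`, so `2^{|M|} ≤ (N² + 1)^{N^{1/3} + 1}` and
`|M| ≪_ε N^{1/3 + ε}`.
-/

open Finset

section Circuit

variable {V : Type*} {G H : SimpleGraph V} {k : ℕ} {E : Set (Sym2 V)}

lemma List.zip_rotate_one_eq_map_range (l : List V) (d : V) :
    l.zip (l.rotate 1) = (List.range l.length).map fun j =>
      (l.getD (j % l.length) d, l.getD ((j + 1) % l.length) d) := by
  apply List.ext_getElem (by simp)
  intro j h₁ h₂
  have hj : j < l.length := by simpa using h₂
  simp [List.getElem_rotate, Nat.mod_eq_of_lt hj, List.getElem?_eq_getElem hj,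
    List.getElem?_eq_getElem (Nat.mod_lt (j + 1) (Nat.zero_lt_of_lt hj))]

lemma IsCircuit.mono (hGH : G ≤ H) (h : IsCircuit G k E) : IsCircuit H k E := by
  obtain ⟨l, hl, hne, hadj, hnd, rfl⟩ := h
  exact ⟨l, hl, hne, fun p hp => hGH (hadj p hp), hnd, rfl⟩

lemma IsCircuit.exists_vertexSeq (h : IsCircuit G k E) :
    ∃ v : ℕ → V, 0 < k ∧ v k = v 0 ∧ (∀ j < k, G.Adj (v j) (v (j + 1))) ∧
      Set.InjOn (fun j => s(v j, v (j + 1))) (Set.Iio k) ∧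
      E = (fun j => s(v j, v (j + 1))) '' Set.Iio k := by
  obtain ⟨l, rfl, hne, hadj, hnd, rfl⟩ := h
  obtain ⟨d, -⟩ := List.exists_mem_of_ne_nil l hne
  have hk : 0 < l.length := List.length_pos_iff.mpr hne
  have hzip := l.zip_rotate_one_eq_map_range d
  have hedges : circuitEdgeList l = (List.range l.length).map fun j =>
      s(l.getD (j % l.length) d, l.getD ((j + 1) % l.length) d) := by
    simp [circuitEdgeList, hzip, Function.comp_def]
  refine ⟨fun j => l.getD (j % l.length) d, hk, by simp, fun j hj => ?_, ?_, ?_⟩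
  · exact hadj _ (hzip ▸ List.mem_map.mpr ⟨j, List.mem_range.mpr hj, rfl⟩)
  · rw [hedges] at hnd
    exact fun i hi j hj hij => (List.nodup_map_iff_inj_on List.nodup_range).mp hnd i
      (List.mem_range.mpr hi) j (List.mem_range.mpr hj) hij
  · ext e
    simp [hedges]

lemma IsCircuit.nonempty (h : IsCircuit G k E) : E.Nonempty := by
  obtain ⟨v, hk, -, -, -, rfl⟩ := h.exists_vertexSeq
  exact ⟨_, Set.mem_image_of_mem _ (Set.mem_Iio.mpr hk)⟩

lemma IsCircuit.finite (h : IsCircuit G k E) : E.Finite := by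
  obtain ⟨v, -, -, -, -, rfl⟩ := h.exists_vertexSeq
  exact (Set.finite_Iio k).image _

lemma IsCircuit.ncard_eq (h : IsCircuit G k E) : E.ncard = k := by
  obtain ⟨v, -, -, -, hinj, rfl⟩ := h.exists_vertexSeq
  rw [hinj.ncard_image, Set.ncard_Iio_nat]

lemma IsCircuit.subset_edgeSet (h : IsCircuit G k E) : E ⊆ G.edgeSet := by
  obtain ⟨v, -, -, hadj, -, rfl⟩ := h.exists_vertexSeq
  rintro _ ⟨j, hj, rfl⟩
  exact hadj j hj

lemma IsCircuit.disjoint_of_deleteEdges {D : Set (Sym2 V)} (h : IsCircuit (G.deleteEdges D) k E) :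
    Disjoint E D := by
  have hE := h.subset_edgeSet
  rw [SimpleGraph.edgeSet_deleteEdges] at hE
  exact Set.disjoint_left.mpr fun e he => (hE he).2

lemma sum_range_pairs_shift {M : Type*} [AddCancelCommMonoid M] (f : ℕ → M) {m : ℕ}
    (h : f (2 * m) = f 0) :
    ∑ i ∈ range m, (f (2 * i + 1) + f (2 * i + 2)) =
      ∑ i ∈ range m, (f (2 * i) + f (2 * i + 1)) := by
  rw [sum_add_distrib, sum_add_distrib, add_comm]
  congr 1
  apply add_right_cancel (b := f 0)
  have h₁ := sum_range_succ (fun i => f (2 * i)) m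
  have h₂ := sum_range_succ' (fun i => f (2 * i)) m
  simp only [mul_add, mul_zero, mul_one, h] at h₁ h₂
  rw [← h₂, h₁]

/-- The two halves are the edges in odd and in even position along the circuit. -/
lemma IsCircuit.exists_balanced_halves [DecidableEq V] (h : IsCircuit G k E) (hk : Even k) :
    ∃ E₁ E₂ : Finset (Sym2 V), E₁.Nonempty ∧ Disjoint E₁ E₂ ∧ ↑(E₁ ∪ E₂) = E ∧
      ∀ x, #{e ∈ E₁ | x ∈ e} = #{e ∈ E₂ | x ∈ e} := by
  obtain ⟨v, hk0, hv, hadj, hinj, rfl⟩ := h.exists_vertexSeq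
  obtain ⟨m, rfl⟩ := hk
  set edge := fun j => s(v j, v (j + 1))
  have hodd : ∀ i ∈ range m, 2 * i + 1 < m + m := fun i hi => by
    rw [mem_range] at hi; omega
  have heven : ∀ i ∈ range m, 2 * i < m + m := fun i hi => by
    rw [mem_range] at hi; omega
  refine ⟨(range m).image fun i => edge (2 * i + 1), (range m).image fun i => edge (2 * i),
    ?_, ?_, ?_, fun x => ?_⟩
  · exact ⟨_, mem_image_of_mem _ (mem_range.mpr (by omega : 0 < m))⟩
  · simp only [disjoint_left, mem_image, not_exists, not_and]
    rintro _ ⟨i, hi, rfl⟩ j hj hij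
    have := hinj (heven j hj) (hodd i hi) hij
    omega
  · ext e
    simp only [coe_union, coe_image, coe_range, Set.mem_union, Set.mem_image, Set.mem_Iio]
    constructor
    · rintro (⟨i, hi, rfl⟩ | ⟨i, hi, rfl⟩) <;> exact ⟨_, by omega, rfl⟩
    · rintro ⟨j, hj, rfl⟩
      obtain ⟨i, rfl | rfl⟩ := Nat.even_or_odd' j
      exacts [Or.inr ⟨i, by omega, rfl⟩, Or.inl ⟨i, by omega, rfl⟩]
  · have hcount : ∀ g : ℕ → ℕ, g.Injective → (∀ i ∈ range m, g i < m + m) →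
        #{e ∈ (range m).image fun i => edge (g i) | x ∈ e} =
          ∑ i ∈ range m, ((if x = v (g i) then 1 else 0) + if x = v (g i + 1) then 1 else 0) := by
      intro g hginj hg
      rw [filter_image, card_image_of_injOn, card_filter]
      · refine sum_congr rfl fun i hi => ?_
        have hne := (hadj (g i) (hg i hi)).ne
        by_cases h₁ : x = v (g i) <;> by_cases h₂ : x = v (g i + 1) <;>
          simp_all [edge]
      · exact fun i hi j hj hij =>
          hginj (hinj (hg i (mem_filter.mp hi).1) (hg j (mem_filter.mp hj).1) hij)
    rw [hcount _ (fun _ _ _ => by omega) hodd, hcount _ (fun _ _ _ => by omega) heven]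
    exact sum_range_pairs_shift (fun j => if x = v j then 1 else 0) (by simp [two_mul, hv])

end Circuit

lemma Set.Finite.exists_pairwiseDisjoint_hitting {α : Type*} {𝒞 : Set (Finset α)}
    (h𝒞 : 𝒞.Finite) :
    ∃ M : Finset (Finset α), ↑M ⊆ 𝒞 ∧ (M : Set (Finset α)).PairwiseDisjoint id ∧
      ∀ s ∈ 𝒞, s.Nonempty → ∃ t ∈ M, ¬Disjoint s t := by
  classical
  set 𝒟 := {M : Finset (Finset α) | ↑M ⊆ 𝒞 ∧ (M : Set (Finset α)).PairwiseDisjoint id}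
  have h𝒟 : 𝒟.Finite := h𝒞.toFinset.powerset.finite_toSet.subset fun M hM => by
    simpa [Set.subset_def] using hM.1
  obtain ⟨M, ⟨hM𝒞, hMdisj⟩, hmax⟩ := h𝒟.exists_maximal ⟨∅, by simp [𝒟]⟩
  refine ⟨M, hM𝒞, hMdisj, fun s hs hne => ?_⟩
  by_contra! hdisj
  have hsM : s ∈ M := by
    have hins : insert s M ∈ 𝒟 := by
      refine ⟨?_, ?_⟩
      · rw [coe_insert]; exact Set.insert_subset hs hM𝒞
      · rw [coe_insert]
        exact hMdisj.insert fun t ht _ => hdisj t ht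
    exact hmax hins (Finset.subset_insert s M) (mem_insert_self s M)
  exact hne.ne_empty (disjoint_self.mp (hdisj s hsM))

lemma Finset.prod_ne_zero_of_zero_notMem {s : Finset ℕ} (hs : 0 ∉ s) : ∏ a ∈ s, a ≠ 0 :=
  prod_ne_zero_iff.mpr fun _ ha => ne_of_mem_of_not_mem ha hs

lemma card_le_of_factorization_eq_off {X Q : Finset ℕ} {L : ℕ} (h0 : ∀ x ∈ X, x ≠ 0)
    (hL : ∀ x ∈ X, ∀ p, x.factorization p ≤ L)
    (hQ : ∀ x ∈ X, ∀ y ∈ X, ∀ p ∉ Q, x.factorization p = y.factorization p) :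
    #X ≤ (L + 1) ^ #Q := by
  have hmaps : ∀ x ∈ X,
      (fun q : Q => x.factorization q) ∈ Fintype.piFinset fun _ => range (L + 1) :=
    fun x hx => Fintype.mem_piFinset.mpr fun q => mem_range.mpr (Nat.lt_succ_of_le (hL x hx q))
  have hinj : Set.InjOn (fun (x : ℕ) (q : Q) => x.factorization q) ↑X := by
    refine fun x hx y hy hxy => Nat.factorization_inj (h0 x hx) (h0 y hy) (Finsupp.ext fun p => ?_)
    by_cases hp : p ∈ Q
    · exact congrFun hxy ⟨p, hp⟩
    · exact hQ x hx y hy p hp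
  calc #X ≤ #(Fintype.piFinset fun _ : Q => range (L + 1)) :=
        card_le_card_of_injOn _ hmaps hinj
    _ = (L + 1) ^ #Q := by simp

lemma injOn_biUnion_ite {ι α : Type*} [DecidableEq ι] [DecidableEq α] {M : Finset ι}
    {B C : ι → Finset α} (hB : ∀ i ∈ M, (B i).Nonempty) (hBC : ∀ i ∈ M, Disjoint (B i) (C i))
    (hdisj : (M : Set ι).PairwiseDisjoint fun i => B i ∪ C i) :
    Set.InjOn (fun S => M.biUnion fun i => if i ∈ S then B i else C i)
      (M.powerset : Set (Finset ι)) := by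
  have hsub : ∀ S ⊆ M, ∀ S' ⊆ M, (M.biUnion fun i => if i ∈ S then B i else C i) =
      (M.biUnion fun i => if i ∈ S' then B i else C i) → S ⊆ S' := by
    intro S hS S' hS' hU i hiS
    by_contra hiS'
    obtain ⟨b, hb⟩ := hB i (hS hiS)
    obtain ⟨j, hj, hbj⟩ := mem_biUnion.mp <|
      hU ▸ mem_biUnion.mpr ⟨i, hS hiS, by simpa [hiS] using hb⟩
    by_cases hij : i = j
    · subst hij
      simp only [hiS', if_false] at hbj
      exact disjoint_left.mp (hBC i (hS hiS)) hb hbj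
    · refine disjoint_left.mp (hdisj (hS hiS) hj hij) (mem_union_left _ hb) ?_
      split_ifs at hbj
      exacts [mem_union_left _ hbj, mem_union_right _ hbj]
  intro S hS S' hS' hU
  simp only [coe_powerset, Set.mem_preimage, Set.mem_powerset_iff, coe_subset] at hS hS'
  exact (hsub S hS S' hS' hU).antisymm (hsub S' hS' S hS hU.symm)

/-- Choosing one side of each balanced pair gives `2 ^ #M` distinct subset products of `A`
with the same factorization off `Q`; they are separated only by their exponents at `Q`. -/
lemma two_pow_card_le_of_balanced {ι : Type*} [DecidableEq ι] {A Q : Finset ℕ} {L : ℕ}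
    (hA : DistinctSubsetProds ↑A) (hA0 : 0 ∉ A) (hL : ∀ p, (∏ a ∈ A, a).factorization p ≤ L)
    {M : Finset ι} {B C : ι → Finset ℕ} (hBA : ∀ i ∈ M, B i ⊆ A) (hCA : ∀ i ∈ M, C i ⊆ A)
    (hB : ∀ i ∈ M, (B i).Nonempty) (hBC : ∀ i ∈ M, Disjoint (B i) (C i))
    (hdisj : (M : Set ι).PairwiseDisjoint fun i => B i ∪ C i)
    (hbal : ∀ i ∈ M, ∀ p ∉ Q, (∏ b ∈ B i, b).factorization p = (∏ c ∈ C i, c).factorization p) :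
    2 ^ #M ≤ (L + 1) ^ #Q := by
  set pick : Finset ι → ι → Finset ℕ := fun S i => if i ∈ S then B i else C i
  have hpickA : ∀ S, ∀ i ∈ M, pick S i ⊆ A := fun S i hi => by
    by_cases hiS : i ∈ S <;> simp [pick, hiS, hBA i hi, hCA i hi]
  have hpick_disj : ∀ S, (M : Set ι).PairwiseDisjoint (pick S) := fun S =>
    hdisj.mono_on fun i _ => by by_cases hiS : i ∈ S <;> simp [pick, hiS]
  set U : Finset ι → Finset ℕ := fun S => M.biUnion (pick S)
  have hUA : ∀ S, U S ⊆ A := fun S => biUnion_subset.mpr (hpickA S)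
  have hU0 : ∀ S, ∏ a ∈ U S, a ≠ 0 := fun S => prod_ne_zero_of_zero_notMem fun h => hA0 (hUA S h)
  have hfac : ∀ S, ∀ p ∉ Q,
      (∏ a ∈ U S, a).factorization p = ∑ i ∈ M, (∏ c ∈ C i, c).factorization p := by
    intro S p hp
    rw [prod_biUnion (hpick_disj S), Nat.factorization_prod, Finsupp.finsetSum_apply]
    · refine sum_congr rfl fun i hi => ?_
      by_cases hiS : i ∈ S
      · simp only [pick, hiS, if_true]; exact hbal i hi p hp
      · simp only [pick, hiS, if_false]
    · exact fun i hi => prod_ne_zero_of_zero_notMem fun h => hA0 (hpickA S i hi h)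
  have hX : #(M.powerset.image fun S => ∏ a ∈ U S, a) = 2 ^ #M := by
    rw [card_image_of_injOn, card_powerset]
    exact fun S hS S' hS' h => injOn_biUnion_ite hB hBC hdisj hS hS'
      (hA _ _ (by exact_mod_cast hUA S) (by exact_mod_cast hUA S') h)
  rw [← hX]
  refine card_le_of_factorization_eq_off ?_ ?_ ?_ <;> simp only [mem_image]
  · rintro _ ⟨S, -, rfl⟩
    exact hU0 S
  · rintro _ ⟨S, -, rfl⟩ p
    exact le_trans ((Nat.factorization_le_iff_dvd (hU0 S) (prod_ne_zero_of_zero_notMem hA0)).mpr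
      (prod_dvd_prod_of_subset _ _ _ (hUA S)) p) (hL p)
  · rintro _ ⟨S, -, rfl⟩ _ ⟨S', -, rfl⟩ p hp
    rw [hfac S p hp, hfac S' p hp]

section PrimeFactorizationGraph

variable {N : ℕ} {A : Finset ℕ}

lemma PLM.ne_one {p : ℕ} (hp : PLM N p) : p ≠ 1 := hp.1.ne_one

lemma PLM.not_mul_mul_dvd {x y z a : ℕ} (hx : PLM N x) (hy : PLM N y) (hz : PLM N z)
    (ha : a ∈ Set.Icc 1 N) : ¬x * y * z ∣ a := by
  intro h
  set c := (N : ℝ) ^ ((1 : ℝ) / 3)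
  have hc : 0 ≤ c := by positivity
  have hcube : c ^ 3 = N := by
    rw [← Real.rpow_natCast, ← Real.rpow_mul (Nat.cast_nonneg N)]; norm_num
  have hle : ((x * y * z : ℕ) : ℝ) ≤ N := by exact_mod_cast (Nat.le_of_dvd ha.1 h).trans ha.2
  have hlt : c * c * c < x * y * z := mul_lt_mul'' (mul_lt_mul'' hx.2.1 hy.2.1 hc hc) hz.2.1
    (by positivity) hc
  push_cast at hle
  nlinarith

lemma pfGraph_adj_eq_one_or_PLM {x y : ℕ} (h : (pfGraph N A).Adj x y) : x = 1 ∨ PLM N x := by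
  obtain ⟨-, ⟨hx, -⟩ | ⟨-, hx, -⟩ | ⟨hx, -⟩⟩ := h
  exacts [Or.inl hx, Or.inr hx, Or.inr hx]

lemma pfGraph_edge_eq_of_forall_mem_iff {e e' : Sym2 ℕ} (he : e ∈ (pfGraph N A).edgeSet)
    (he' : e' ∈ (pfGraph N A).edgeSet) (h : ∀ p, PLM N p → (p ∈ e ↔ p ∈ e')) : e = e' := by
  induction e with | _ x y => ?_
  induction e' with | _ x' y' => ?_
  rw [SimpleGraph.mem_edgeSet] at he he'
  have hx := pfGraph_adj_eq_one_or_PLM he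
  have hy := pfGraph_adj_eq_one_or_PLM (SimpleGraph.adj_symm _ he)
  have hx' := pfGraph_adj_eq_one_or_PLM he'
  have hy' := pfGraph_adj_eq_one_or_PLM (SimpleGraph.adj_symm _ he')
  have hne : x ≠ y := he.ne
  have hne' : x' ≠ y' := he'.ne
  simp only [Sym2.mem_iff] at h
  rw [Sym2.eq_iff]
  rcases hx with rfl | hx <;> rcases hy with rfl | hy <;> rcases hx' with rfl | hx' <;>
    rcases hy' with rfl | hy' <;> grind [PLM.ne_one]

/-- On the primes of `(N^{1/3}, N]`, `a` has the exponents of the product of the vertices of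
`e` (the vertex `1` contributes nothing). -/
def IsEdgeWitness (N : ℕ) (A : Finset ℕ) (e : Sym2 ℕ) (a : ℕ) : Prop :=
  a ∈ A ∧ ∀ p, PLM N p → a.factorization p = if p ∈ e then 1 else 0

lemma PLM.factorization_eq_one {x y a : ℕ} (hx : PLM N x) (hy : PLM N y) (hxy : x ≠ y)
    (ha : a ∈ Set.Icc 1 N) (hxa : x ∣ a) (hya : y ∣ a) : a.factorization x = 1 := by
  have hpos : 1 ≤ a.factorization x :=
    hx.1.factorization_pos_of_dvd (by have := ha.1; omega) hxa
  by_contra hne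
  have hsq : x ^ 2 ∣ a :=
    (pow_dvd_pow x (by omega)).trans (Nat.ordProj_dvd a x)
  have hcop : Nat.Coprime (x ^ 2) y := ((Nat.coprime_primes hx.1 hy.1).mpr hxy).pow_left 2
  exact hx.not_mul_mul_dvd hx hy ha (sq x ▸ hcop.mul_dvd_of_dvd_of_dvd hsq hya)

lemma PLM.factorization_eq_zero {x y p a : ℕ} (hx : PLM N x) (hy : PLM N y) (hp : PLM N p)
    (hxy : x ≠ y) (hpx : p ≠ x) (hpy : p ≠ y) (ha : a ∈ Set.Icc 1 N) (hxa : x ∣ a)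
    (hya : y ∣ a) : a.factorization p = 0 := by
  refine Nat.factorization_eq_zero_of_not_dvd fun hpa => hx.not_mul_mul_dvd hy hp ha ?_
  have hcop : ∀ {q r}, PLM N q → PLM N r → q ≠ r → Nat.Coprime q r :=
    fun hq hr hqr => (Nat.coprime_primes hq.1 hr.1).mpr hqr
  exact (Nat.Coprime.mul_left (hcop hx hp hpx.symm) (hcop hy hp hpy.symm)).mul_dvd_of_dvd_of_dvd
    ((hcop hx hy hxy).mul_dvd_of_dvd_of_dvd hxa hya) hpa

lemma isEdgeWitness_one_of_padicValNat {y a : ℕ} (ha : a ∈ A) (hy : padicValNat y a = 1)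
    (h0 : ∀ q, PLM N q → q ≠ y → padicValNat q a = 0) : IsEdgeWitness N A s(1, y) a := by
  refine ⟨ha, fun p hp => ?_⟩
  rw [Nat.factorization_def _ hp.1]
  by_cases hpy : p = y
  · simp [hpy, hy]
  · simp [hpy, hp.ne_one, h0 p hp hpy]

lemma exists_isEdgeWitness (hA : ↑A ⊆ Set.Icc 1 N) {x y : ℕ} (h : (pfGraph N A).Adj x y) :
    ∃ a, IsEdgeWitness N A s(x, y) a := by
  obtain ⟨hxy, ⟨rfl, -, a, ha, hy, h0⟩ | ⟨rfl, -, a, ha, hx, h0⟩ | ⟨hx, hy, a, ha, hxa, hya⟩⟩ := h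
  · exact ⟨a, isEdgeWitness_one_of_padicValNat ha hy h0⟩
  · exact ⟨a, Sym2.eq_swap ▸ isEdgeWitness_one_of_padicValNat ha hx h0⟩
  · refine ⟨a, ha, fun p hp => ?_⟩
    by_cases hpx : p = x
    · subst hpx; simp [hp.factorization_eq_one hy hxy (hA ha) hxa hya]
    by_cases hpy : p = y
    · subst hpy; simp [hp.factorization_eq_one hx hxy.symm (hA ha) hya hxa]
    simp [hpx, hpy, hx.factorization_eq_zero hy hp hxy hpx hpy (hA ha) hxa hya]

lemma injOn_of_isEdgeWitness {w : Sym2 ℕ → ℕ}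
    (hw : ∀ e ∈ (pfGraph N A).edgeSet, IsEdgeWitness N A e (w e)) :
    Set.InjOn w (pfGraph N A).edgeSet := by
  refine fun e he e' he' hee' => pfGraph_edge_eq_of_forall_mem_iff he he' fun p hp => ?_
  have h := ((hw e he).2 p hp).symm.trans (hee' ▸ (hw e' he').2 p hp)
  by_cases h₁ : p ∈ e <;> by_cases h₂ : p ∈ e' <;> simp_all

lemma exists_balanced_of_isCircuit (hA0 : 0 ∉ A) {w : Sym2 ℕ → ℕ}
    (hw : ∀ e ∈ (pfGraph N A).edgeSet, IsEdgeWitness N A e (w e)) {k : ℕ} {E : Set (Sym2 ℕ)}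
    (hc : IsCircuit (pfGraph N A) k E) (hk : Even k) :
    ∃ B C : Finset ℕ, B ⊆ A ∧ C ⊆ A ∧ B.Nonempty ∧ Disjoint B C ∧ ↑(B ∪ C) ⊆ w '' E ∧
      ∀ p, PLM N p → (∏ b ∈ B, b).factorization p = (∏ c ∈ C, c).factorization p := by
  obtain ⟨E₁, E₂, hne, hdisj, hunion, hbal⟩ := hc.exists_balanced_halves hk
  have hedge : ∀ e ∈ E₁ ∪ E₂, e ∈ (pfGraph N A).edgeSet := fun e he =>
    hc.subset_edgeSet (hunion ▸ mem_coe.mpr he)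
  have hinj : Set.InjOn w ↑(E₁ ∪ E₂) :=
    (injOn_of_isEdgeWitness hw).mono fun e he => hedge e he
  have hsub : ∀ {F}, F ⊆ E₁ ∪ E₂ → F.image w ⊆ A := fun hF => image_subset_iff.mpr fun e he =>
    (hw e (hedge e (hF he))).1
  have hprod : ∀ {F}, F ⊆ E₁ ∪ E₂ → ∀ p, PLM N p →
      (∏ b ∈ F.image w, b).factorization p = #{e ∈ F | p ∈ e} := by
    intro F hF p hp
    rw [prod_image (hinj.mono (coe_subset.mpr hF)), Nat.factorization_prod,
      Finsupp.finsetSum_apply, card_filter]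
    · exact sum_congr rfl fun e he => (hw e (hedge e (hF he))).2 p hp
    · exact fun e he => ne_of_mem_of_not_mem (hw e (hedge e (hF he))).1 hA0
  refine ⟨E₁.image w, E₂.image w, hsub subset_union_left, hsub subset_union_right, hne.image w,
    ?_, ?_, fun p hp => ?_⟩
  · simp only [disjoint_left, mem_image, not_exists, not_and]
    rintro _ ⟨e, he, rfl⟩ e' he' hw'
    have := hinj (mem_union_right _ he') (mem_union_left _ he) hw'
    exact disjoint_left.mp hdisj he (this ▸ he')
  · rw [← image_union, coe_image, ← hunion]
  · rw [hprod subset_union_left p hp, hprod subset_union_right p hp, hbal]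

lemma factorization_prod_eq_of_forall_PLM {B C : Finset ℕ} (hB : ↑B ⊆ Set.Icc 1 N)
    (hC : ↑C ⊆ Set.Icc 1 N)
    (h : ∀ p, PLM N p → (∏ b ∈ B, b).factorization p = (∏ c ∈ C, c).factorization p)
    {p : ℕ} (hp : p ∉ range (⌊(N : ℝ) ^ ((1 : ℝ) / 3)⌋₊ + 1)) :
    (∏ b ∈ B, b).factorization p = (∏ c ∈ C, c).factorization p := by
  have hlarge : ∀ {S : Finset ℕ}, ↑S ⊆ Set.Icc 1 N → N < p → (∏ s ∈ S, s).factorization p = 0 := by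
    intro S hS hNp
    rw [Nat.factorization_prod fun s hs => by have := (hS hs).1; omega, Finsupp.finsetSum_apply]
    exact sum_eq_zero fun s hs => Nat.factorization_eq_zero_of_lt ((hS hs).2.trans_lt hNp)
  rw [mem_range, not_lt, Nat.succ_le_iff, Nat.floor_lt (by positivity)] at hp
  by_cases hprime : p.Prime
  · rcases le_or_gt p N with hpN | hNp
    · exact h p ⟨hprime, hp, hpN⟩
    · rw [hlarge hB hNp, hlarge hC hNp]
  · simp [Nat.factorization_eq_zero_of_not_prime _ hprime]

lemma factorization_prod_le_mul_self (hA : ↑A ⊆ Set.Icc 1 N) (p : ℕ) :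
    (∏ a ∈ A, a).factorization p ≤ N * N := by
  have hA0 : ∀ a ∈ A, a ≠ 0 := fun a ha => by have := (hA ha).1; omega
  have hcard : #A ≤ N := by
    simpa using card_le_card (s := A) (t := Icc 1 N) fun a ha => mem_Icc.mpr (hA ha)
  rw [Nat.factorization_prod hA0, Finsupp.finsetSum_apply]
  calc ∑ a ∈ A, a.factorization p ≤ ∑ _a ∈ A, N :=
        sum_le_sum fun a ha => ((Nat.factorization_lt p (hA0 a ha)).trans_le (hA ha).2).le
    _ ≤ N * N := by rw [sum_const, smul_eq_mul]; exact Nat.mul_le_mul_right N hcard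

lemma cast_le_mul_rpow_of_two_pow_le {ε : ℝ} (hε : 0 < ε) {m : ℕ}
    (h : 2 ^ m ≤ (N * N + 1) ^ (⌊(N : ℝ) ^ ((1 : ℝ) / 3)⌋₊ + 1)) :
    (m : ℝ) ≤ 4 * 2 ^ ε / (ε * Real.log 2) * (N : ℝ) ^ ((1 : ℝ) / 3 + ε) := by
  rcases Nat.eq_zero_or_pos N with rfl | hN
  · have : m = 0 := by
      rw [zero_mul, zero_add, one_pow] at h
      by_contra hm
      exact (Nat.one_lt_two_pow hm).not_ge h
    simp only [this, CharP.cast_eq_zero]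
    positivity
  have hN1 : (1 : ℝ) ≤ N := by exact_mod_cast hN
  set c := (N : ℝ) ^ ((1 : ℝ) / 3)
  have hc : 1 ≤ c := Real.one_le_rpow hN1 (by norm_num)
  have hq : ((⌊c⌋₊ + 1 : ℕ) : ℝ) ≤ 2 * c := by
    push_cast; linarith [Nat.floor_le (zero_le_one.trans hc)]
  have hlog : Real.log (N * N + 1) ≤ 2 * 2 ^ ε / ε * (N : ℝ) ^ ε := by
    calc Real.log (N * N + 1) ≤ Real.log ((N + 1) ^ 2) :=
          Real.log_le_log (by positivity) (by nlinarith)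
      _ = 2 * Real.log (N + 1) := by rw [Real.log_pow]; norm_num
      _ ≤ 2 * ((N + 1) ^ ε / ε) := by gcongr; exact Real.log_le_rpow_div (by positivity) hε
      _ ≤ 2 * ((2 * N) ^ ε / ε) := by gcongr; linarith
      _ = 2 * 2 ^ ε / ε * (N : ℝ) ^ ε := by
          rw [Real.mul_rpow (by norm_num) (by positivity)]; ring
  have hm : (m : ℝ) * Real.log 2 ≤ (⌊c⌋₊ + 1 : ℕ) * Real.log (N * N + 1) := by
    have := Real.log_le_log (by positivity) (show ((2 ^ m : ℕ) : ℝ) ≤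
      ((N * N + 1) ^ (⌊c⌋₊ + 1) : ℕ) by exact_mod_cast h)
    push_cast at this
    rwa [Real.log_pow, Real.log_pow] at this
  have hlog2 : 0 < Real.log 2 := Real.log_pos one_lt_two
  rw [Real.rpow_add (by positivity), div_mul_eq_mul_div, le_div_iff₀ (by positivity)]
  calc (m : ℝ) * (ε * Real.log 2) = ε * ((m : ℝ) * Real.log 2) := by ring
    _ ≤ ε * ((2 * c) * (2 * 2 ^ ε / ε * (N : ℝ) ^ ε)) := mul_le_mul_of_nonneg_left
        (hm.trans (mul_le_mul hq hlog (Real.log_nonneg (by nlinarith)) (by positivity))) hε.le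
    _ = 4 * 2 ^ ε * (c * (N : ℝ) ^ ε) := by field_simp; ring

lemma pfGraph_edgeSet_finite : (pfGraph N A).edgeSet.Finite := by
  refine (range (N + 2)).sym2.finite_toSet.subset fun e he => ?_
  induction e with | _ x y => ?_
  have hlt : ∀ {u v}, (pfGraph N A).Adj u v → u < N + 2 := fun h =>
    (pfGraph_adj_eq_one_or_PLM h).elim (by omega) fun hu => by have := hu.2.2; omega
  simp only [mem_coe, mem_sym2_iff, Sym2.mem_iff, mem_range, forall_eq_or_imp, forall_eq]
  exact ⟨hlt he, hlt (SimpleGraph.adj_symm _ he)⟩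

lemma card_le_of_pairwiseDisjoint_even_circuits {ε : ℝ} (hε : 0 < ε) (hA : ↑A ⊆ Set.Icc 1 N)
    (hDSP : DistinctSubsetProds ↑A) {M : Finset (Finset (Sym2 ℕ))}
    (hM : ∀ F ∈ M, ∃ k, Even k ∧ IsCircuit (pfGraph N A) k ↑F)
    (hdisj : (M : Set (Finset (Sym2 ℕ))).PairwiseDisjoint id) :
    (#M : ℝ) ≤ 4 * 2 ^ ε / (ε * Real.log 2) * (N : ℝ) ^ ((1 : ℝ) / 3 + ε) := by
  have hA0 : 0 ∉ A := fun h => by have := (hA h).1; omega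
  have hwit : ∀ e ∈ (pfGraph N A).edgeSet, ∃ a, IsEdgeWitness N A e a := by
    intro e he
    induction e with | _ x y => exact exists_isEdgeWitness hA he
  choose! w hw using hwit
  have hsplit : ∀ F ∈ M, ∃ B C : Finset ℕ, B ⊆ A ∧ C ⊆ A ∧ B.Nonempty ∧ Disjoint B C ∧
      ↑(B ∪ C) ⊆ w '' ↑F ∧
      ∀ p, PLM N p → (∏ b ∈ B, b).factorization p = (∏ c ∈ C, c).factorization p :=
    fun F hF => let ⟨_, hk, hc⟩ := hM F hF; exists_balanced_of_isCircuit hA0 hw hc hk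
  choose! B C hBA hCA hB hBC hBCw hbal using hsplit
  have hBCdisj : (M : Set (Finset (Sym2 ℕ))).PairwiseDisjoint fun F => B F ∪ C F := by
    intro F hF F' hF' hne
    have hedge : ∀ {F}, F ∈ M → ↑F ⊆ (pfGraph N A).edgeSet := fun hF =>
      let ⟨_, _, hc⟩ := hM _ hF; hc.subset_edgeSet
    refine disjoint_left.mpr fun x hx hx' => ?_
    obtain ⟨e, he, rfl⟩ := hBCw F hF hx
    obtain ⟨e', he', hee'⟩ := hBCw F' hF' hx'
    have := injOn_of_isEdgeWitness hw (hedge hF' he') (hedge hF he) hee'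
    exact disjoint_left.mp (hdisj hF hF' hne) he (this ▸ he')
  have hsub : ∀ {S}, S ⊆ A → ↑S ⊆ Set.Icc 1 N := fun hS => (coe_subset.mpr hS).trans hA
  refine cast_le_mul_rpow_of_two_pow_le hε (card_range (⌊(N : ℝ) ^ ((1 : ℝ) / 3)⌋₊ + 1) ▸ ?_)
  exact two_pow_card_le_of_balanced hDSP hA0 (factorization_prod_le_mul_self hA)
    hBA hCA hB hBC hBCdisj fun F hF p hp =>
      factorization_prod_eq_of_forall_PLM (hsub (hBA F hF)) (hsub (hCA F hF)) (hbal F hF) hp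

end PrimeFactorizationGraph

/-- One can remove at most `C·N^{5/12+ε}` edges from the prime factorization graph so
that the remaining graph contains no circuit of even length at most `2·N^{1/12}`. -/
theorem stmt10 : ∀ ε : ℝ, 0 < ε → ∃ C : ℝ, 0 < C ∧
    ∀ N : ℕ, ∀ A : Finset ℕ, ↑A ⊆ Set.Icc 1 N → DistinctSubsetProds ↑A →
    (∀ a ∈ A, ∀ b ∈ A, (∀ p : ℕ, PLM N p → padicValNat p a = padicValNat p b) → a = b) →
    (∀ a ∈ A, ∃ p : ℕ, PLM N p ∧ p ∣ a) →
    ∃ E' : Set (Sym2 ℕ), E' ⊆ (pfGraph N A).edgeSet ∧ E'.Finite ∧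
      (E'.ncard : ℝ) ≤ C * (N : ℝ) ^ ((5 : ℝ) / 12 + ε) ∧
      ∀ k : ℕ, ∀ E'' : Set (Sym2 ℕ), Even k → (k : ℝ) ≤ 2 * (N : ℝ) ^ ((1 : ℝ) / 12) →
        ¬ IsCircuit ((pfGraph N A).deleteEdges E') k E'' := by
  intro ε hε
  refine ⟨8 * 2 ^ ε / (ε * Real.log 2), by have := Real.log_pos one_lt_two; positivity, ?_⟩
  intro N A hA hDSP _ _
  set K := 2 * (N : ℝ) ^ ((1 : ℝ) / 12)
  set 𝒞 := {F : Finset (Sym2 ℕ) | ∃ k : ℕ, Even k ∧ (k : ℝ) ≤ K ∧ IsCircuit (pfGraph N A) k ↑F}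
  have h𝒞 : 𝒞.Finite := pfGraph_edgeSet_finite.toFinset.powerset.finite_toSet.subset
    fun F ⟨_, _, _, hc⟩ => by simpa [Set.subset_def] using hc.subset_edgeSet
  obtain ⟨M, hM𝒞, hdisj, hhit⟩ := h𝒞.exists_pairwiseDisjoint_hitting
  have hcard : ∀ F ∈ M, (#F : ℝ) ≤ K := fun F hF => by
    obtain ⟨k, -, hkK, hc⟩ := hM𝒞 hF
    rwa [← Set.ncard_coe_finset, hc.ncard_eq]
  have hM := card_le_of_pairwiseDisjoint_even_circuits hε hA hDSP
    (fun F hF => let ⟨k, hk, _, hc⟩ := hM𝒞 hF; ⟨k, hk, hc⟩) hdisj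
  refine ⟨↑(M.biUnion id), ?_, finite_toSet _, ?_, fun k E hk hkK hc => ?_⟩
  · intro e he
    obtain ⟨F, hF, heF⟩ := mem_biUnion.mp he
    exact (hM𝒞 hF).choose_spec.2.2.subset_edgeSet heF
  · rw [Set.ncard_coe_finset]
    calc (#(M.biUnion id) : ℝ) ≤ ∑ F ∈ M, (#F : ℝ) := by exact_mod_cast card_biUnion_le
      _ ≤ #M * K := by simpa using sum_le_sum hcard
      _ ≤ (4 * 2 ^ ε / (ε * Real.log 2) * (N : ℝ) ^ ((1 : ℝ) / 3 + ε)) * K := by gcongr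
      _ = 8 * 2 ^ ε / (ε * Real.log 2) * (N : ℝ) ^ ((5 : ℝ) / 12 + ε) := by
        rw [show (5 : ℝ) / 12 + ε = (1 / 3 + ε) + 1 / 12 by ring, Real.rpow_add' (Nat.cast_nonneg N)
          (show (1 : ℝ) / 3 + ε + 1 / 12 ≠ 0 by positivity)]
        ring
  · obtain ⟨F, rfl⟩ := hc.finite.exists_finset_coe
    obtain ⟨t, ht, hFt⟩ := hhit F ⟨k, hk, hkK, hc.mono (SimpleGraph.deleteEdges_le _)⟩
      (by exact_mod_cast hc.nonempty)
    obtain ⟨e, heF, het⟩ := not_disjoint_iff.mp hFt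
    exact Set.disjoint_left.mp hc.disjoint_of_deleteEdges heF (mem_biUnion.mpr ⟨t, ht, het⟩)
end

section
/- Let M > 0 and let G be a simple graph containing no circuit of even length at most 2M. Then any two distinct cycles of odd length at most M in G are vertex-disjoint. -/
section

open SimpleGraph

variable {V : Type*} {G : SimpleGraph V}

theorem circuitEdgeList_cons (a : V) (t : List V) :
    circuitEdgeList (a :: t) = List.zipWith (s(·, ·)) (a :: t ++ [a]) (t ++ [a]) := by
  rw [circuitEdgeList, List.rotate_cons_succ, List.rotate_zero, List.map_zip_eq_zipWith]
  conv_rhs => rw [← List.append_nil (t ++ [a]), List.zipWith_append (by simp)]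
  rw [List.zipWith_nil_right, List.append_nil]
  rfl

theorem circuitEdgeList_dropLast_support {u : V} (c : G.Walk u u) :
    circuitEdgeList c.support.dropLast = c.edges := by
  cases c with
  | nil => rfl
  | cons h p =>
    have hs : (Walk.cons h p).support = u :: p.support.dropLast ++ [u] := by
      rw [Walk.support_cons, List.cons_append, p.dropLast_support_concat]
    rw [Walk.edges_eq_zipWith_support, hs, List.dropLast_concat, circuitEdgeList_cons]
    rfl

theorem isCircuit_of_isTrail {u : V} {c : G.Walk u u} (hc : c.IsTrail) (hne : ¬ c.Nil) :
    IsCircuit G c.length {e | e ∈ c.edges} := by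
  have hedges := circuitEdgeList_dropLast_support c
  refine ⟨c.support.dropLast, by simp, ?_, fun p hp ↦ ?_, hedges ▸ hc.edges_nodup,
    by rw [hedges]⟩
  · simpa [← List.length_pos_iff, Walk.not_nil_iff_lt_length] using hne
  · exact c.adj_of_mem_edges (hedges ▸ List.mem_map_of_mem hp)

theorem IsCircuit.exists_walk {k : ℕ} {E : Set (Sym2 V)} (h : IsCircuit G k E) :
    ∃ (u : V) (c : G.Walk u u), c.IsTrail ∧ c.length = k ∧ E = {e | e ∈ c.edges} := by
  obtain ⟨_ | ⟨a, t⟩, rfl, hne, hadj, hnd, rfl⟩ := h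
  · exact absurd rfl hne
  have hchain : (a :: t ++ [a]).IsChain G.Adj := by
    rw [List.rotate_cons_succ, List.rotate_zero] at hadj
    rw [List.isChain_cons_append_singleton_iff_forall₂, List.forall₂_iff_zip]
    exact ⟨by simp, fun h ↦ hadj _ h⟩
  obtain ⟨c, hsupp⟩ : ∃ c : G.Walk a a, c.support = a :: t ++ [a] :=
    ⟨(Walk.ofSupport _ (by simp) hchain).copy (by simp) (by simp),
      (Walk.support_copy ..).trans (Walk.support_ofSupport ..)⟩
  have hedges : c.edges = circuitEdgeList (a :: t) := by
    rw [Walk.edges_eq_zipWith_support, circuitEdgeList_cons, hsupp]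
    rfl
  have hlen : c.length = (a :: t).length := by
    rw [← Nat.add_right_cancel_iff, ← Walk.length_support, hsupp, List.length_append,
      List.length_singleton]
  exact ⟨a, c, ⟨hedges ▸ hnd⟩, hlen, by rw [hedges]⟩

theorem IsCycle.isCircuit {k : ℕ} {E : Set (Sym2 V)} (h : IsCycle G k E) : IsCircuit G k E :=
  let ⟨l, hlen, hne, _, hadj, hnd, hE⟩ := h
  ⟨l, hlen, hne, hadj, hnd, hE⟩

namespace SimpleGraph.Walk

/-- The alternative `a = u` is what makes the statement go through by induction along `w`. -/
theorem exists_ear {S : Set V} {F : Set (Sym2 V)} (hF : ∀ e ∈ F, ∀ x ∈ e, x ∈ S) {v : V}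
    (hv : v ∈ S) {u : V} (w : G.Walk u v) (hw : ∃ e ∈ w.edges, e ∉ F) :
    ∃ (a b : V) (q : G.Walk a b), (a ∈ S ∨ a = u) ∧ b ∈ S ∧ ¬ q.Nil ∧
      q.edges.Sublist w.edges ∧ ∀ e ∈ q.edges, e ∉ F := by
  induction w with
  | nil => simp at hw
  | @cons u u' _ h w ih =>
    by_cases hw' : ∃ e ∈ w.edges, e ∉ F
    · obtain ⟨a, b, q, ha, hb, hq, hsub, hqF⟩ := ih hv hw'
      by_cases haS : a ∈ S
      · exact ⟨a, b, q, .inl haS, hb, hq, hsub.cons _, hqF⟩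
      · obtain rfl : a = u' := ha.resolve_left haS
        refine ⟨u, b, cons h q, .inr rfl, hb, not_nil_cons, hsub.cons_cons _, ?_⟩
        simpa using ⟨fun he ↦ haS (hF _ he _ (Sym2.mem_mk_right _ _)), hqF⟩
    · push Not at hw'
      have hu' : u' ∈ S := by
        cases w with
        | nil => exact hv
        | cons h' _ => exact hF _ (hw' _ List.mem_cons_self) _ (Sym2.mem_mk_left _ _)
      have huu' : s(u, u') ∉ F := by
        obtain ⟨e, he, heF⟩ := hw
        rcases List.mem_cons.1 he with rfl | he
        · exact heF
        · exact absurd (hw' e he) heF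
      exact ⟨u, u', cons h nil, .inr rfl, hu', not_nil_cons, (List.nil_sublist _).cons_cons _,
        by simpa using huu'⟩

theorem exists_even_closed_trail_of_ear [DecidableEq V] {x y : V} {c : G.Walk x x}
    (hc : c.IsTrail) (hodd : Odd c.length) {q : G.Walk x y} (hq : q.IsTrail) (hqn : ¬ q.Nil)
    (hy : y ∈ c.support) (hdisj : c.edges.Disjoint q.edges) :
    ∃ (z : V) (w : G.Walk z z), w.IsTrail ∧ ¬ w.Nil ∧ Even w.length ∧
      w.length ≤ c.length + q.length := by
  rw [← c.take_spec hy] at hc hodd hdisj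
  rw [length_append] at hodd
  rw [edges_append, List.disjoint_append_left] at hdisj
  have hq₀ : 0 < q.length := not_nil_iff_lt_length.1 hqn
  have hc₁ : (c.takeUntil y hy).length ≤ c.length := length_takeUntil_le_length c hy
  have hc₂ : (c.dropUntil y hy).length ≤ c.length := length_dropUntil_le_length c hy
  rcases Nat.even_or_odd ((c.takeUntil y hy).length + q.length) with heven | hodd'
  · refine ⟨x, (c.takeUntil y hy).append q.reverse, ?_, ?_, ?_, ?_⟩
    · simpa [hc.of_append_left, hq.reverse] using hdisj.1
    · rw [not_nil_iff_lt_length, length_append, length_reverse]; omega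
    · simpa using heven
    · rw [length_append, length_reverse]; omega
  · refine ⟨x, q.append (c.dropUntil y hy), ?_, ?_, ?_, ?_⟩
    · simpa [hc.of_append_right, hq] using hdisj.2.symm
    · rw [not_nil_iff_lt_length, length_append]; omega
    · rw [length_append, Nat.even_iff]
      rw [Nat.odd_iff] at hodd hodd'
      omega
    · rw [length_append]; omega

theorem exists_even_closed_trail_of_odd_closed_trail [DecidableEq V] {u₁ u₂ v : V}
    {c₁ : G.Walk u₁ u₁} {c₂ : G.Walk u₂ u₂} (h₁ : c₁.IsTrail) (h₂ : c₂.IsTrail)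
    (hodd : Odd c₁.length) (hv₁ : v ∈ c₁.support) (hv₂ : v ∈ c₂.support)
    (he : ∃ e ∈ c₂.edges, e ∉ c₁.edges) :
    ∃ (z : V) (w : G.Walk z z), w.IsTrail ∧ ¬ w.Nil ∧ Even w.length ∧
      w.length ≤ c₁.length + c₂.length := by
  have hrot₂ := c₂.rotate_edges v hv₂
  obtain ⟨a, b, q, ha, hb, hqn, hsub, hqc₁⟩ := (c₂.rotate v hv₂).exists_ear
    (S := {x | x ∈ c₁.support}) (F := {e | e ∈ c₁.edges})
    (fun _ he _ hx ↦ c₁.mem_support_of_mem_edges he hx) hv₁ (by simpa [hrot₂.perm.mem_iff])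
  have ha : a ∈ c₁.support := ha.elim id (· ▸ hv₁)
  have hq : q.IsTrail := ⟨hsub.nodup ((isTrail_rotate hv₂).2 h₂).edges_nodup⟩
  have hqlen : q.length ≤ c₂.length := by
    simpa [hrot₂.perm.length_eq] using hsub.length_le
  obtain ⟨z, w, hw, hwn, heven, hlen⟩ := exists_even_closed_trail_of_ear
    ((isTrail_rotate ha).2 h₁) (by rwa [length_rotate]) hq hqn
    ((mem_support_rotate_iff ..).2 hb)
    (fun e he₁ he₂ ↦ hqc₁ e he₂ ((c₁.rotate_edges a ha).perm.mem_iff.1 he₁))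
  exact ⟨z, w, hw, hwn, heven, by rw [length_rotate] at hlen; omega⟩

end SimpleGraph.Walk

theorem IsCircuit.exists_even_circuit {k₁ k₂ : ℕ} {E₁ E₂ : Set (Sym2 V)}
    (h₁ : IsCircuit G k₁ E₁) (h₂ : IsCircuit G k₂ E₂) (hodd : Odd k₁) {v : V}
    (hv₁ : ∃ e ∈ E₁, v ∈ e) (hv₂ : ∃ e ∈ E₂, v ∈ e) (he : ∃ e ∈ E₂, e ∉ E₁) :
    ∃ (k : ℕ) (E : Set (Sym2 V)), Even k ∧ k ≤ k₁ + k₂ ∧ IsCircuit G k E := by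
  classical
  obtain ⟨u₁, c₁, hc₁, rfl, rfl⟩ := h₁.exists_walk
  obtain ⟨u₂, c₂, hc₂, rfl, rfl⟩ := h₂.exists_walk
  have hv {u : V} (c : G.Walk u u) (h : ∃ e ∈ c.edges, v ∈ e) : v ∈ c.support :=
    let ⟨_, he, hve⟩ := h; c.mem_support_of_mem_edges he hve
  obtain ⟨z, w, hw, hwn, heven, hlen⟩ := Walk.exists_even_closed_trail_of_odd_closed_trail
    hc₁ hc₂ hodd (hv c₁ hv₁) (hv c₂ hv₂) he
  exact ⟨w.length, _, heven, hlen, isCircuit_of_isTrail hw hwn⟩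

end

theorem stmt11_general {V : Type*} (G : SimpleGraph V) (M : ℝ)
    (hnoeven : ∀ k : ℕ, ∀ E : Set (Sym2 V), Even k → (k : ℝ) ≤ 2 * M →
      ¬ IsCircuit G k E)
    (k₁ k₂ : ℕ) (E₁ E₂ : Set (Sym2 V))
    (h₁ : IsCycle G k₁ E₁) (h₂ : IsCycle G k₂ E₂)
    (hodd₁ : Odd k₁) (hodd₂ : Odd k₂)
    (hk₁ : (k₁ : ℝ) ≤ M) (hk₂ : (k₂ : ℝ) ≤ M)
    (hne : E₁ ≠ E₂) :
    ∀ v : V, ¬ ((∃ e ∈ E₁, v ∈ e) ∧ (∃ e ∈ E₂, v ∈ e)) := by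
  rintro v ⟨hv₁, hv₂⟩
  have hdiff : (∃ e ∈ E₂, e ∉ E₁) ∨ ∃ e ∈ E₁, e ∉ E₂ := by
    by_contra! h
    exact hne (Set.Subset.antisymm h.2 h.1)
  obtain ⟨k, E, heven, hk, hE⟩ : ∃ k E, Even k ∧ k ≤ k₁ + k₂ ∧ IsCircuit G k E := by
    rcases hdiff with he | he
    · exact h₁.isCircuit.exists_even_circuit h₂.isCircuit hodd₁ hv₁ hv₂ he
    · obtain ⟨k, E, heven, hk, hE⟩ :=
        h₂.isCircuit.exists_even_circuit h₁.isCircuit hodd₂ hv₂ hv₁ he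
      exact ⟨k, E, heven, by omega, hE⟩
  have hkM : (k : ℝ) ≤ k₁ + k₂ := by exact_mod_cast hk
  exact hnoeven k E heven (by linarith) hE

/-- In a graph with no even circuits of length at most `2M`, any two distinct odd cycles
of length at most `M` are vertex-disjoint. -/
theorem stmt11 {V : Type*} (G : SimpleGraph V) (M : ℝ) (hM : 0 < M)
    (hnoeven : ∀ k : ℕ, ∀ E : Set (Sym2 V), Even k → (k : ℝ) ≤ 2 * M →
      ¬ IsCircuit G k E)
    (k₁ k₂ : ℕ) (E₁ E₂ : Set (Sym2 V))
    (h₁ : IsCycle G k₁ E₁) (h₂ : IsCycle G k₂ E₂)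
    (hodd₁ : Odd k₁) (hodd₂ : Odd k₂)
    (hk₁ : (k₁ : ℝ) ≤ M) (hk₂ : (k₂ : ℝ) ≤ M)
    (hne : E₁ ≠ E₂) :
    ∀ v : V, ¬ ((∃ e ∈ E₁, v ∈ e) ∧ (∃ e ∈ E₂, v ∈ e)) :=
  stmt11_general G M hnoeven k₁ k₂ E₁ E₂ h₁ h₂ hodd₁ hodd₂ hk₁ hk₂ hne
end
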